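/- arXiv:2106.15569 — 5 statements merged into one kernel-verified Lean document; each statement's English description precedes it below -/
import Mathlib

section
/- Let every tangency point of X in Σ be a fold or a cusp (so that Σ is the disjoint union of the transversal points Σ_X, the fold points and the cusp points of X). Then the exit-time function t_X^+ : Σ⁺ → [0,∞] is upper semicontinuous, i.e., for every p ∈ Σ⁺ one has limsup_{p̃ → p, p̃ ∈ Σ⁺} t_X^+(p̃) ≤ t_X^+(p). Under the analogous hypotheses the functions t_Y^+ : Σ⁻ → [0,∞] and t_{Z^s}^+ : Σ^S → [0,∞] are upper semicontinuous. -/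
open scoped Manifold ENNReal
open Set

noncomputable section

variable {E H M : Type*} [NormedAddCommGroup E] [NormedSpace ℝ E]
  [TopologicalSpace H] [TopologicalSpace M] [ChartedSpace H M]

/-- The Lie derivative `Wf(p) = df_p(W(p))` of a function `f` along a vector field `W`. -/
def lieDeriv (I : ModelWithCorners ℝ E H) (W : (p : M) → TangentSpace I p)
    (f : M → ℝ) : M → ℝ :=
  fun p => mfderiv I 𝓘(ℝ, ℝ) f p (W p)

open Classical in
/-- The exit time of the region `S` under the flow `φ`, exiting through the set `Exit`:
`∞` if the forward orbit stays in `S`; `inf {t > 0 | φ p t ∈ Exit}` if the forward orbit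
initially stays in `S`; `0` otherwise. -/
def exitTimeGen (φ : M → ℝ → M) (S Exit : Set M) (p : M) : ℝ≥0∞ :=
  if ∀ t : ℝ, 0 ≤ t → φ p t ∈ S then ∞
  else if ∃ ε > (0 : ℝ), ∀ t ∈ Icc (0 : ℝ) ε, φ p t ∈ S then
    sInf {s : ℝ≥0∞ | ∃ t : ℝ, 0 < t ∧ φ p t ∈ Exit ∧ s = ENNReal.ofReal t}
  else 0

/-- The set `S_X^{ic}` of invisible cusps of `X`: `Xh(p) = X²h(p) = 0`, `X³h(p) < 0`
and `{Dh(p), D(Xh)(p), D(X²h)(p)}` linearly independent. -/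
def invisibleCusps (I : ModelWithCorners ℝ E H) (X : (p : M) → TangentSpace I p)
    (h : M → ℝ) : Set M :=
  {p | h p = 0 ∧ lieDeriv I X h p = 0 ∧ lieDeriv I X (lieDeriv I X h) p = 0 ∧
    lieDeriv I X (lieDeriv I X (lieDeriv I X h)) p < 0 ∧
    LinearIndependent ℝ
      ![(mfderiv I 𝓘(ℝ, ℝ) h p : TangentSpace I p →L[ℝ] ℝ),
        (mfderiv I 𝓘(ℝ, ℝ) (lieDeriv I X h) p : TangentSpace I p →L[ℝ] ℝ),
        (mfderiv I 𝓘(ℝ, ℝ) (lieDeriv I X (lieDeriv I X h)) p : TangentSpace I p →L[ℝ] ℝ)]}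

/-- The exit time `t_X^+ : Σ⁺ → [0,∞]`, with `Σ⁺ = {h ≥ 0}` and exit set
`S_X^{ic} ∪ Σ_X^- = S_X^{ic} ∪ {p ∈ Σ | Xh(p) < 0}`. -/
def exitTimePlus (I : ModelWithCorners ℝ E H) (X : (p : M) → TangentSpace I p)
    (φ : M → ℝ → M) (h : M → ℝ) : M → ℝ≥0∞ :=
  exitTimeGen φ {p | 0 ≤ h p}
    (invisibleCusps I X h ∪ {p | h p = 0 ∧ lieDeriv I X h p < 0})

/-! ### Auxiliary real-analysis lemmas -/

open Filter Topology

private lemma aux_h1neg {g : ℝ → ℝ} {d u : ℝ} (hg : HasDerivAt g d u) (h0 : g u = 0)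
    (hd : d < 0) : ∀ᶠ s in 𝓝[>] u, g s < 0 := by
  have ht := hasDerivAt_iff_tendsto_slope.mp hg
  have hev : ∀ᶠ s in 𝓝[≠] u, slope g u s < 0 := ht.eventually_lt_const hd
  have hev' : ∀ᶠ s in 𝓝[>] u, slope g u s < 0 :=
    hev.filter_mono (nhdsWithin_mono u (fun s hs => ne_of_gt hs))
  filter_upwards [hev', self_mem_nhdsWithin] with s hs hs'
  have hsu : (0:ℝ) < s - u := sub_pos.mpr hs'
  have heq : slope g u s = g s / (s - u) := by rw [slope_def_field, h0, sub_zero]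
  rw [heq] at hs
  by_contra hge
  push_neg at hge
  exact absurd (div_nonneg hge hsu.le) (not_le.mpr hs)

private lemma aux_h1pos {g : ℝ → ℝ} {d u : ℝ} (hg : HasDerivAt g d u) (h0 : g u = 0)
    (hd : 0 < d) : ∀ᶠ s in 𝓝[>] u, 0 < g s := by
  have := aux_h1neg hg.neg (by simp [h0]) (by simpa using hd)
  filter_upwards [this] with s hs
  simpa using hs

private lemma aux_core2 {g g1 g2 : ℝ → ℝ} {u : ℝ}
    (hg : ∀ s, HasDerivAt g (g1 s) s) (hg1 : ∀ s, HasDerivAt g1 (g2 s) s)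
    (hc2 : ContinuousAt g2 u) (h0 : g u = 0) (h1 : g1 u = 0) (h2 : g2 u < 0) :
    (∀ᶠ s in 𝓝[<] u, g s < 0) ∧ (∀ᶠ s in 𝓝[>] u, g s < 0) := by
  obtain ⟨l, r, hlr, hsub⟩ : ∃ l r, u ∈ Ioo l r ∧ Ioo l r ⊆ {s | g2 s < 0} :=
    mem_nhds_iff_exists_Ioo_subset.mp (hc2.preimage_mem_nhds (Iio_mem_nhds h2))
  have hanti : StrictAntiOn g1 (Ioo l r) := by
    refine strictAntiOn_of_deriv_neg (convex_Ioo _ _)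
      (fun x _ => (hg1 x).continuousAt.continuousWithinAt) (fun x hx => ?_)
    rw [interior_Ioo] at hx
    rw [(hg1 x).deriv]
    exact hsub hx
  have hg1pos : ∀ s ∈ Ioo l u, 0 < g1 s := fun s hs => by
    have := hanti (Ioo_subset_Ioo_right hlr.2.le hs) hlr hs.2
    rwa [h1] at this
  have hg1neg : ∀ s ∈ Ioo u r, g1 s < 0 := fun s hs => by
    have := hanti hlr (Ioo_subset_Ioo_left hlr.1.le hs) hs.1
    rwa [h1] at this
  constructor
  · have hmono : StrictMonoOn g (Ioc l u) := by
      refine strictMonoOn_of_deriv_pos (convex_Ioc _ _)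
        (fun x _ => (hg x).continuousAt.continuousWithinAt) (fun x hx => ?_)
      rw [interior_Ioc] at hx
      rw [(hg x).deriv]
      exact hg1pos x hx
    filter_upwards [Ioo_mem_nhdsLT_of_mem (show u ∈ Ioc l u from ⟨hlr.1, le_refl u⟩)]
      with s hs
    have := hmono (Ioo_subset_Ioc_self hs) ⟨hlr.1, le_refl u⟩ hs.2
    rwa [h0] at this
  · have hanti' : StrictAntiOn g (Ico u r) := by
      refine strictAntiOn_of_deriv_neg (convex_Ico _ _)
        (fun x _ => (hg x).continuousAt.continuousWithinAt) (fun x hx => ?_)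
      rw [interior_Ico] at hx
      rw [(hg x).deriv]
      exact hg1neg x hx
    filter_upwards [Ioo_mem_nhdsGT_of_mem (show u ∈ Ico u r from ⟨le_refl u, hlr.2⟩)]
      with s hs
    have := hanti' ⟨le_refl u, hlr.2⟩ (Ioo_subset_Ico_self hs) hs.1
    rwa [h0] at this

private lemma aux_core2pos {g g1 g2 : ℝ → ℝ} {u : ℝ}
    (hg : ∀ s, HasDerivAt g (g1 s) s) (hg1 : ∀ s, HasDerivAt g1 (g2 s) s)
    (hc2 : ContinuousAt g2 u) (h0 : g u = 0) (h1 : g1 u = 0) (h2 : 0 < g2 u) :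
    (∀ᶠ s in 𝓝[<] u, 0 < g s) ∧ (∀ᶠ s in 𝓝[>] u, 0 < g s) := by
  have := aux_core2 (g := fun s => -g s) (g1 := fun s => -g1 s) (g2 := fun s => -g2 s)
    (fun s => (hg s).neg) (fun s => (hg1 s).neg) hc2.neg (by simp [h0]) (by simp [h1])
    (by simpa using h2)
  exact ⟨this.1.mono fun s hs => by simpa using hs, this.2.mono fun s hs => by simpa using hs⟩

private lemma aux_core3 {g g1 g2 g3 : ℝ → ℝ} {u : ℝ}
    (hg : ∀ s, HasDerivAt g (g1 s) s) (hg1 : ∀ s, HasDerivAt g1 (g2 s) s)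
    (hg2 : ∀ s, HasDerivAt g2 (g3 s) s)
    (hc3 : ContinuousAt g3 u) (h0 : g u = 0) (h1 : g1 u = 0) (h2 : g2 u = 0)
    (h3 : g3 u < 0) :
    ∀ᶠ s in 𝓝[>] u, g s < 0 := by
  obtain ⟨l, r, hlr, hsub⟩ : ∃ l r, u ∈ Ioo l r ∧ Ioo l r ⊆ {s | g3 s < 0} :=
    mem_nhds_iff_exists_Ioo_subset.mp (hc3.preimage_mem_nhds (Iio_mem_nhds h3))
  have hanti2 : StrictAntiOn g2 (Ioo l r) := by
    refine strictAntiOn_of_deriv_neg (convex_Ioo _ _)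
      (fun x _ => (hg2 x).continuousAt.continuousWithinAt) (fun x hx => ?_)
    rw [interior_Ioo] at hx; rw [(hg2 x).deriv]; exact hsub hx
  have hg2neg : ∀ s ∈ Ioo u r, g2 s < 0 := fun s hs => by
    have := hanti2 hlr (Ioo_subset_Ioo_left hlr.1.le hs) hs.1
    rwa [h2] at this
  have hanti1 : StrictAntiOn g1 (Ico u r) := by
    refine strictAntiOn_of_deriv_neg (convex_Ico _ _)
      (fun x _ => (hg1 x).continuousAt.continuousWithinAt) (fun x hx => ?_)
    rw [interior_Ico] at hx; rw [(hg1 x).deriv]; exact hg2neg x hx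
  have hg1neg : ∀ s ∈ Ioo u r, g1 s < 0 := fun s hs => by
    have := hanti1 ⟨le_refl u, hlr.2⟩ (Ioo_subset_Ico_self hs) hs.1
    rwa [h1] at this
  have hantig : StrictAntiOn g (Ico u r) := by
    refine strictAntiOn_of_deriv_neg (convex_Ico _ _)
      (fun x _ => (hg x).continuousAt.continuousWithinAt) (fun x hx => ?_)
    rw [interior_Ico] at hx; rw [(hg x).deriv]; exact hg1neg x hx
  filter_upwards [Ioo_mem_nhdsGT_of_mem (show u ∈ Ico u r from ⟨le_refl u, hlr.2⟩)]
    with s hs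
  have := hantig ⟨le_refl u, hlr.2⟩ (Ioo_subset_Ico_self hs) hs.1
  rwa [h0] at this

private lemma aux_core3pos {g g1 g2 g3 : ℝ → ℝ} {u : ℝ}
    (hg : ∀ s, HasDerivAt g (g1 s) s) (hg1 : ∀ s, HasDerivAt g1 (g2 s) s)
    (hg2 : ∀ s, HasDerivAt g2 (g3 s) s)
    (hc3 : ContinuousAt g3 u) (h0 : g u = 0) (h1 : g1 u = 0) (h2 : g2 u = 0)
    (h3 : 0 < g3 u) :
    ∀ᶠ s in 𝓝[>] u, 0 < g s := by
  have := aux_core3 (g := fun s => -g s) (g1 := fun s => -g1 s) (g2 := fun s => -g2 s)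
    (g3 := fun s => -g3 s) (fun s => (hg s).neg) (fun s => (hg1 s).neg)
    (fun s => (hg2 s).neg) hc3.neg (by simp [h0]) (by simp [h1]) (by simp [h2])
    (by simpa using h3)
  exact this.mono fun s hs => by simpa using hs

/-! ### Smoothness of the Lie derivative and the chain rule along the flow -/

private lemma aux_smooth_snd_tb :
    ContMDiff 𝓘(ℝ,ℝ).tangent 𝓘(ℝ,ℝ) (⊤ : ℕ∞) (fun q : TangentBundle 𝓘(ℝ,ℝ) ℝ => (show ℝ from q.2)) := by
  rw [contMDiff_iff]
  refine ⟨(continuous_snd).comp (tangentBundleModelSpaceHomeomorph 𝓘(ℝ,ℝ)).continuous, ?_⟩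
  intro x y
  simp only [mfld_simps, tangentBundle_model_space_chartAt]
  exact contDiff_snd.contDiffOn

private lemma aux_contMDiff_lieDeriv (I : ModelWithCorners ℝ E H)
    [IsManifold I (⊤ : ℕ∞) M] (X : (p : M) → TangentSpace I p)
    (hX : ContMDiff I I.tangent (⊤ : ℕ∞) (fun p => (⟨p, X p⟩ : TangentBundle I M)))
    (f : M → ℝ) (hf : ContMDiff I 𝓘(ℝ, ℝ) (⊤ : ℕ∞) f) :
    ContMDiff I 𝓘(ℝ, ℝ) (⊤ : ℕ∞) (lieDeriv I X f) := by
  have h1 : ContMDiff I.tangent 𝓘(ℝ,ℝ).tangent (⊤ : ℕ∞) (tangentMap I 𝓘(ℝ,ℝ) f) :=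
    hf.contMDiff_tangentMap (by simp)
  exact (aux_smooth_snd_tb.comp h1).comp hX

private lemma aux_hasDerivAt_flow (I : ModelWithCorners ℝ E H)
    [IsManifold I (⊤ : ℕ∞) M]
    (X : (p : M) → TangentSpace I p) (φX : M → ℝ → M)
    (hφODE : ∀ p t, HasMFDerivAt 𝓘(ℝ, ℝ) I (φX p) t
      ((ContinuousLinearMap.id ℝ ℝ).smulRight (X (φX p t))))
    {f : M → ℝ} (hf : ContMDiff I 𝓘(ℝ, ℝ) (⊤ : ℕ∞) f) (r : M) (t : ℝ) :
    HasDerivAt (fun s => f (φX r s)) (lieDeriv I X f (φX r t)) t := by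
  have h2 : HasMFDerivAt I 𝓘(ℝ, ℝ) f (φX r t) (mfderiv I 𝓘(ℝ, ℝ) f (φX r t)) :=
    ((hf.mdifferentiable (by simp)) (φX r t)).hasMFDerivAt
  have h3 := h2.comp t (hφODE r t)
  have h4 : HasFDerivAt (fun s => f (φX r s)) (((mfderiv I 𝓘(ℝ, ℝ) f (φX r t)).comp
      ((ContinuousLinearMap.id ℝ ℝ).smulRight (X (φX r t)))) : ℝ →L[ℝ] ℝ) t :=
    hasMFDerivAt_iff_hasFDerivAt.mp h3
  have h5 := @HasFDerivAt.hasDerivAt ℝ _ ℝ _ inferInstance inferInstance _ _ inferInstance _ h4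
  have h6 : lieDeriv I X f (φX r t) =
      ((mfderiv I 𝓘(ℝ, ℝ) f (φX r t)).comp
        ((ContinuousLinearMap.id ℝ ℝ).smulRight (X (φX r t)))) 1 := by
    show mfderiv I 𝓘(ℝ, ℝ) f (φX r t) (X (φX r t))
      = mfderiv I 𝓘(ℝ, ℝ) f (φX r t) ((1:ℝ) • X (φX r t))
    rw [one_smul]
  rw [h6]
  exact h5

/-! ### The global exit lemma -/

private lemma aux_exit_le (I : ModelWithCorners ℝ E H)
    [IsManifold I (⊤ : ℕ∞) M]
    (h : M → ℝ) (hsmooth : ContMDiff I 𝓘(ℝ, ℝ) (⊤ : ℕ∞) h)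
    (X : (p : M) → TangentSpace I p)
    (hXsmooth : ContMDiff I I.tangent (⊤ : ℕ∞) (fun p => (⟨p, X p⟩ : TangentBundle I M)))
    (φX : M → ℝ → M)
    (hφODE : ∀ p t, HasMFDerivAt 𝓘(ℝ, ℝ) I (φX p) t
      ((ContinuousLinearMap.id ℝ ℝ).smulRight (X (φX p t))))
    (htang : ∀ p : M, h p = 0 → lieDeriv I X h p = 0 →
      (lieDeriv I X (lieDeriv I X h) p ≠ 0 ∨
        (lieDeriv I X (lieDeriv I X h) p = 0 ∧
          lieDeriv I X (lieDeriv I X (lieDeriv I X h)) p ≠ 0 ∧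
          LinearIndependent ℝ
            ![(mfderiv I 𝓘(ℝ, ℝ) h p : TangentSpace I p →L[ℝ] ℝ),
              (mfderiv I 𝓘(ℝ, ℝ) (lieDeriv I X h) p : TangentSpace I p →L[ℝ] ℝ),
              (mfderiv I 𝓘(ℝ, ℝ) (lieDeriv I X (lieDeriv I X h)) p :
                TangentSpace I p →L[ℝ] ℝ)])))
    (r : M) (T : ℝ) (hT : 0 < T) (hTneg : h (φX r T) < 0) :
    exitTimePlus I X φX h r ≤ ENNReal.ofReal T := by
  have hXh : ContMDiff I 𝓘(ℝ, ℝ) (⊤ : ℕ∞) (lieDeriv I X h) :=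
    aux_contMDiff_lieDeriv I X hXsmooth h hsmooth
  have hX2h : ContMDiff I 𝓘(ℝ, ℝ) (⊤ : ℕ∞) (lieDeriv I X (lieDeriv I X h)) :=
    aux_contMDiff_lieDeriv I X hXsmooth _ hXh
  have hX3h : ContMDiff I 𝓘(ℝ, ℝ) (⊤ : ℕ∞) (lieDeriv I X (lieDeriv I X (lieDeriv I X h))) :=
    aux_contMDiff_lieDeriv I X hXsmooth _ hX2h
  have hφc : Continuous (fun s => φX r s) :=
    continuous_iff_continuousAt.mpr (fun s => (hφODE r s).continuousAt)
  set g : ℝ → ℝ := fun s => h (φX r s) with hgdef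
  have hdg : ∀ s, HasDerivAt g (lieDeriv I X h (φX r s)) s :=
    fun s => aux_hasDerivAt_flow I X φX hφODE hsmooth r s
  have hdg1 : ∀ s, HasDerivAt (fun s => lieDeriv I X h (φX r s))
      (lieDeriv I X (lieDeriv I X h) (φX r s)) s :=
    fun s => aux_hasDerivAt_flow I X φX hφODE hXh r s
  have hdg2 : ∀ s, HasDerivAt (fun s => lieDeriv I X (lieDeriv I X h) (φX r s))
      (lieDeriv I X (lieDeriv I X (lieDeriv I X h)) (φX r s)) s :=
    fun s => aux_hasDerivAt_flow I X φX hφODE hX2h r s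
  have hgc : Continuous g := hsmooth.continuous.comp hφc
  rw [exitTimePlus, exitTimeGen]
  have hc1 : ¬ ∀ t : ℝ, 0 ≤ t → φX r t ∈ {p : M | 0 ≤ h p} := by
    push_neg
    exact ⟨T, hT.le, by simpa using not_le.mpr hTneg⟩
  rw [if_neg hc1]
  by_cases hc2 : ∃ ε > (0:ℝ), ∀ t ∈ Icc (0:ℝ) ε, φX r t ∈ {p : M | 0 ≤ h p}
  swap
  · rw [if_neg hc2]; exact zero_le
  rw [if_pos hc2]
  obtain ⟨ε₀, hε₀, hIcc⟩ := hc2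
  set A : Set ℝ := {s | s ∈ Icc 0 T ∧ g s < 0} with hAdef
  have hTA : T ∈ A := ⟨⟨hT.le, le_refl T⟩, hTneg⟩
  have hAne : A.Nonempty := ⟨T, hTA⟩
  have hbdd : BddBelow A := ⟨0, fun a ha => ha.1.1⟩
  set τ := sInf A with hτdef
  have hτT : τ ≤ T := csInf_le hbdd hTA
  have hτε : ε₀ ≤ τ := by
    refine le_csInf hAne (fun a ha => ?_)
    by_contra hlt
    push_neg at hlt
    exact absurd (hIcc a ⟨ha.1.1, hlt.le⟩) (not_le.mpr ha.2)
  have hτpos : 0 < τ := lt_of_lt_of_le hε₀ hτε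
  have hnnbefore : ∀ s, 0 ≤ s → s < τ → 0 ≤ g s := by
    intro s hs0 hsτ
    by_contra hlt
    push_neg at hlt
    exact absurd (csInf_le hbdd ⟨⟨hs0, hsτ.le.trans hτT⟩, hlt⟩) (not_le.mpr hsτ)
  have hgτnn : 0 ≤ g τ := by
    have ht : Filter.Tendsto g (𝓝[<] τ) (𝓝 (g τ)) := hgc.continuousAt.continuousWithinAt
    refine ge_of_tendsto ht ?_
    filter_upwards [Ioo_mem_nhdsLT_of_mem (show τ ∈ Ioc 0 τ from ⟨hτpos, le_refl τ⟩)]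
      with s hs
    exact hnnbefore s hs.1.le hs.2
  have hfreq : ∀ δ > (0:ℝ), ∃ s, τ < s ∧ s < τ + δ ∧ g s < 0 := by
    intro δ hδ
    obtain ⟨a, haA, halt⟩ := exists_lt_of_csInf_lt hAne (show sInf A < τ + δ by
      rw [← hτdef]; linarith)
    have haτ : τ ≤ a := csInf_le hbdd haA
    rcases eq_or_lt_of_le haτ with heq | hlt'
    · exact absurd (heq ▸ haA.2) (not_lt.mpr hgτnn)
    · exact ⟨a, hlt', halt, haA.2⟩
  have hgτle : g τ ≤ 0 := by
    by_contra hpos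
    push_neg at hpos
    obtain ⟨l, r', hmem, hsub⟩ : ∃ l r', τ ∈ Ioo l r' ∧ Ioo l r' ⊆ {s | 0 < g s} :=
      mem_nhds_iff_exists_Ioo_subset.mp (hgc.continuousAt.preimage_mem_nhds (Ioi_mem_nhds hpos))
    obtain ⟨s, hs1, hs2, hs3⟩ := hfreq (r' - τ) (by linarith [hmem.2])
    exact absurd (hsub ⟨hmem.1.trans hs1, by linarith⟩) (not_lt.mpr hs3.le)
  have hgτ : g τ = 0 := le_antisymm hgτle hgτnn
  have hfreq' : ∃ᶠ s in 𝓝[>] τ, g s < 0 := by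
    rw [(nhdsGT_basis τ).frequently_iff]
    intro δ hδ
    obtain ⟨s, hs1, hs2, hs3⟩ := hfreq (δ - τ) (by linarith)
    exact ⟨s, ⟨hs1, by linarith⟩, hs3⟩
  -- classification at τ
  have hmain : φX r τ ∈ invisibleCusps I X h ∪ {p : M | h p = 0 ∧ lieDeriv I X h p < 0} := by
    have hEq0 : h (φX r τ) = 0 := hgτ
    rcases lt_trichotomy (lieDeriv I X h (φX r τ)) 0 with hlt | heq | hgt
    · exact Or.inr ⟨hEq0, hlt⟩
    · rcases lt_trichotomy (lieDeriv I X (lieDeriv I X h) (φX r τ)) 0 with h2lt | h2eq | h2gt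
      · exfalso
        have hev := (aux_core2 hdg hdg1 ((hX2h.continuous.comp hφc).continuousAt) hgτ heq h2lt).1
        obtain ⟨s, hs1, hs2⟩ := (hev.and
          (Ioo_mem_nhdsLT_of_mem (show τ ∈ Ioc 0 τ from ⟨hτpos, le_refl τ⟩))).exists
        exact absurd (hnnbefore s hs2.1.le hs2.2) (not_le.mpr hs1)
      · rcases htang (φX r τ) hEq0 heq with h2ne | ⟨_, h3ne, hli⟩
        · exact absurd h2eq h2ne
        · rcases lt_or_gt_of_ne h3ne with h3lt | h3gt
          · exact Or.inl ⟨hEq0, heq, h2eq, h3lt, hli⟩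
          · exfalso
            have hev := aux_core3pos hdg hdg1 hdg2
              ((hX3h.continuous.comp hφc).continuousAt) hgτ heq h2eq h3gt
            obtain ⟨s, hs1, hs2⟩ := (hfreq'.and_eventually hev).exists
            linarith
      · exfalso
        have hev := (aux_core2pos hdg hdg1
          ((hX2h.continuous.comp hφc).continuousAt) hgτ heq h2gt).2
        obtain ⟨s, hs1, hs2⟩ := (hfreq'.and_eventually hev).exists
        linarith
    · exfalso
      have hev := aux_h1pos (hdg τ) hgτ hgt
      obtain ⟨s, hs1, hs2⟩ := (hfreq'.and_eventually hev).exists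
      linarith
  refine le_trans (sInf_le ⟨τ, hτpos, hmain, rfl⟩) (ENNReal.ofReal_le_ofReal hτT)

theorem exitTimePlus_upperSemicontinuousOn
    (I : ModelWithCorners ℝ E H) [I.Boundaryless] [IsManifold I (⊤ : ℕ∞) M]
    [CompactSpace M] [T2Space M] [FiniteDimensional ℝ E]
    (hdim : Module.finrank ℝ E = 3)
    (h : M → ℝ) (hsmooth : ContMDiff I 𝓘(ℝ, ℝ) (⊤ : ℕ∞) h)
    (hreg : ∀ p : M, h p = 0 → mfderiv I 𝓘(ℝ, ℝ) h p ≠ 0)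
    (X : (p : M) → TangentSpace I p)
    (hXsmooth : ContMDiff I I.tangent (⊤ : ℕ∞) (fun p => (⟨p, X p⟩ : TangentBundle I M)))
    (φX : M → ℝ → M)
    (hφcont : Continuous fun q : M × ℝ => φX q.1 q.2)
    (hφ0 : ∀ p, φX p 0 = p)
    (hφadd : ∀ p s t, φX (φX p s) t = φX p (s + t))
    (hφODE : ∀ p t, HasMFDerivAt 𝓘(ℝ, ℝ) I (φX p) t
      ((ContinuousLinearMap.id ℝ ℝ).smulRight (X (φX p t))))
    -- every point of Σ is either transversal for X, or a fold, or a cusp of X: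
    (htang : ∀ p : M, h p = 0 → lieDeriv I X h p = 0 →
      (lieDeriv I X (lieDeriv I X h) p ≠ 0 ∨
        (lieDeriv I X (lieDeriv I X h) p = 0 ∧
          lieDeriv I X (lieDeriv I X (lieDeriv I X h)) p ≠ 0 ∧
          LinearIndependent ℝ
            ![(mfderiv I 𝓘(ℝ, ℝ) h p : TangentSpace I p →L[ℝ] ℝ),
              (mfderiv I 𝓘(ℝ, ℝ) (lieDeriv I X h) p : TangentSpace I p →L[ℝ] ℝ),
              (mfderiv I 𝓘(ℝ, ℝ) (lieDeriv I X (lieDeriv I X h)) p :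
                TangentSpace I p →L[ℝ] ℝ)]))) :
    UpperSemicontinuousOn (exitTimePlus I X φX h) {p : M | 0 ≤ h p} := by
  intro p hp y hy
  have hXh : ContMDiff I 𝓘(ℝ, ℝ) (⊤ : ℕ∞) (lieDeriv I X h) :=
    aux_contMDiff_lieDeriv I X hXsmooth h hsmooth
  have hX2h : ContMDiff I 𝓘(ℝ, ℝ) (⊤ : ℕ∞) (lieDeriv I X (lieDeriv I X h)) :=
    aux_contMDiff_lieDeriv I X hXsmooth _ hXh
  have hX3h : ContMDiff I 𝓘(ℝ, ℝ) (⊤ : ℕ∞) (lieDeriv I X (lieDeriv I X (lieDeriv I X h))) :=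
    aux_contMDiff_lieDeriv I X hXsmooth _ hX2h
  have hφc : Continuous (fun s => φX p s) :=
    continuous_iff_continuousAt.mpr (fun s => (hφODE p s).continuousAt)
  suffices hT : ∃ T : ℝ, 0 < T ∧ ENNReal.ofReal T < y ∧ h (φX p T) < 0 by
    obtain ⟨T, hT0, hTy, hTneg⟩ := hT
    have hcont : Continuous (fun q : M => h (φX q T)) :=
      hsmooth.continuous.comp (hφcont.comp (continuous_id.prodMk continuous_const))
    have hU : IsOpen {q : M | h (φX q T) < 0} := isOpen_lt hcont continuous_const
    filter_upwards [mem_nhdsWithin_of_mem_nhds (hU.mem_nhds hTneg)] with q hq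
    exact lt_of_le_of_lt
      (aux_exit_le I h hsmooth X hXsmooth φX hφODE htang q T hT0 hq) hTy
  -- produce such a T from `exitTimePlus p < y`
  rw [exitTimePlus, exitTimeGen] at hy
  split_ifs at hy with hc1 hc2
  · exact absurd hy (by simp)
  · -- second branch: sInf < y
    obtain ⟨a, ⟨t, ht0, htE, ha⟩, hay⟩ := sInf_lt_iff.mp hy
    subst ha
    have hy' : ∀ᶠ s in 𝓝[>] t, ENNReal.ofReal s < y := by
      have : {s : ℝ | ENNReal.ofReal s < y} ∈ 𝓝 t :=
        ENNReal.continuous_ofReal.continuousAt.preimage_mem_nhds (Iio_mem_nhds hay)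
      exact Filter.eventually_iff_exists_mem.mpr
        ⟨_, nhdsWithin_le_nhds this, fun s hs => hs⟩
    have hev : ∀ᶠ s in 𝓝[>] t, h (φX p s) < 0 := by
      rcases htE with hq | hq
      · obtain ⟨hq0, hq1, hq2, hq3, _⟩ := hq
        exact aux_core3 (fun s => aux_hasDerivAt_flow I X φX hφODE hsmooth p s)
          (fun s => aux_hasDerivAt_flow I X φX hφODE hXh p s)
          (fun s => aux_hasDerivAt_flow I X φX hφODE hX2h p s)
          ((hX3h.continuous.comp hφc).continuousAt) hq0 hq1 hq2 hq3
      · exact aux_h1neg (aux_hasDerivAt_flow I X φX hφODE hsmooth p t) hq.1 hq.2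
    obtain ⟨s, hsneg, hsy, hst⟩ := (hev.and (hy'.and self_mem_nhdsWithin)).exists
    exact ⟨s, ht0.trans hst, hsy, hsneg⟩
  · -- third branch: 0 < y
    push_neg at hc2
    have hy0 : (0:ℝ≥0∞) < y := hy
    obtain ⟨c, hc0, hcy⟩ : ∃ c : ℝ, 0 < c ∧ ENNReal.ofReal c < y := by
      rcases eq_or_ne y ⊤ with rfl | hne
      · exact ⟨1, one_pos, by simp⟩
      · have htp := ENNReal.toReal_pos hy0.ne' hne
        refine ⟨y.toReal / 2, by linarith, ?_⟩
        rw [ENNReal.ofReal_lt_iff_lt_toReal (by linarith) hne]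
        linarith
    obtain ⟨t, htIcc, htneg⟩ := hc2 c hc0
    simp only [mem_setOf_eq, not_le] at htneg
    have ht0 : 0 < t := by
      rcases htIcc.1.eq_or_lt with heq | hlt
      · exfalso
        rw [← heq, hφ0] at htneg
        exact absurd hp (not_le.mpr htneg)
      · exact hlt
    exact ⟨t, ht0, lt_of_le_of_lt (ENNReal.ofReal_le_ofReal htIcc.2) hcy, htneg⟩
end
end

section
/- Assume Σ = Σ_X ∪ S_X^i, i.e., every point of Σ is either a transversal point of X (Xh(p) ≠ 0) or an invisible fold of X (Xh(p) = 0, X²h(p) < 0). Then the exit-time function t_X^+ : Σ⁺ → [0,∞] is continuous. The analogous statements hold for t_Y^+ and t_{Z^s}^+. -/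
/- STATEMENT 1: if every point of Σ is either a transversal point of X or an
invisible fold of X (Σ = Σ_X ∪ S_X^i), then the exit-time function
t_X^+ : Σ⁺ → [0,∞] is continuous.  The statement is formulated for an arbitrary
smooth vector field X and smooth function h with 0 a regular value; the analogous
statements for t_Y^+ and t_{Z^s}^+ are instances of this generic statement. -/

open scoped Manifold ENNReal Topology
open Set Filter Bundle

noncomputable section

variable {E H M : Type*} [NormedAddCommGroup E] [NormedSpace ℝ E]
  [TopologicalSpace H] [TopologicalSpace M] [ChartedSpace H M]

/-! ### Real-analysis helpers -/

/-- If `f t₀ = 0` and `f' t₀ = c < 0`, then `f < 0` just after `t₀` and `f > 0` just before. -/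
lemma slope_sign' {f : ℝ → ℝ} {c t₀ : ℝ} (hf : HasDerivAt f c t₀) (h0 : f t₀ = 0) (hc : c < 0) :
    (∀ᶠ t in 𝓝[>] t₀, f t < 0) ∧ (∀ᶠ t in 𝓝[<] t₀, 0 < f t) := by
  have hs := hasDerivAt_iff_tendsto_slope.1 hf
  have hev : ∀ᶠ t in 𝓝[≠] t₀, slope f t₀ t < 0 := hs.eventually (gt_mem_nhds hc)
  constructor
  · have h1 : 𝓝[>] t₀ ≤ 𝓝[≠] t₀ := nhdsWithin_mono t₀ fun x hx => ne_of_gt hx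
    filter_upwards [hev.filter_mono h1, self_mem_nhdsWithin] with t ht hmem
    rw [slope_def_field, h0, sub_zero] at ht
    have h2 : (0:ℝ) < t - t₀ := sub_pos.2 hmem
    rcases div_neg_iff.1 ht with ⟨h3, h4⟩ | ⟨h3, h4⟩
    · linarith
    · exact h3
  · have h1 : 𝓝[<] t₀ ≤ 𝓝[≠] t₀ := nhdsWithin_mono t₀ fun x hx => ne_of_lt hx
    filter_upwards [hev.filter_mono h1, self_mem_nhdsWithin] with t ht hmem
    rw [slope_def_field, h0, sub_zero] at ht
    have h2 : t - t₀ < 0 := sub_neg.2 hmem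
    rcases div_neg_iff.1 ht with ⟨h3, h4⟩ | ⟨h3, h4⟩
    · exact h3
    · linarith

lemma slope_sign_pos' {f : ℝ → ℝ} {c t₀ : ℝ} (hf : HasDerivAt f c t₀) (h0 : f t₀ = 0)
    (hc : 0 < c) :
    (∀ᶠ t in 𝓝[>] t₀, 0 < f t) ∧ (∀ᶠ t in 𝓝[<] t₀, f t < 0) := by
  have := slope_sign' (f := fun t => -f t) hf.neg (by simp [h0]) (by linarith)
  exact ⟨this.1.mono fun t ht => by have ht' : -f t < 0 := ht; linarith, this.2.mono fun t ht => by have ht' : 0 < -f t := ht; linarith⟩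

/-- Second-derivative test: if `f t₀ = 0`, `f' t₀ = 0` and `f'' t₀ < 0`, then `f < 0`
in a punctured neighbourhood of `t₀` (stated with both one-sided versions). -/
lemma second_deriv_sign {f A : ℝ → ℝ} {c t₀ : ℝ} (hf : ∀ t, HasDerivAt f (A t) t)
    (hA : HasDerivAt A c t₀) (h0 : f t₀ = 0) (hA0 : A t₀ = 0) (hc : c < 0) :
    (∀ᶠ t in 𝓝[>] t₀, f t < 0) ∧ (∀ᶠ t in 𝓝[<] t₀, f t < 0) := by
  obtain ⟨hr, hl⟩ := slope_sign' hA hA0 hc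
  have hfd : Differentiable ℝ f := fun t => (hf t).differentiableAt
  have hfc : Continuous f := hfd.continuous
  constructor
  · obtain ⟨u, hu, hsub⟩ := mem_nhdsGT_iff_exists_Ioo_subset.1 hr
    have hm : t₀ < (t₀ + u) / 2 ∧ (t₀ + u) / 2 < u := by
      constructor <;> · simp only [mem_Ioi] at hu; linarith
    have hanti : StrictAntiOn f (Icc t₀ ((t₀ + u) / 2)) := by
      apply strictAntiOn_of_deriv_neg (convex_Icc _ _) hfc.continuousOn
      intro x hx
      rw [interior_Icc] at hx
      rw [(hf x).deriv]
      exact hsub ⟨hx.1, hx.2.trans hm.2⟩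
    filter_upwards [Ioc_mem_nhdsGT hm.1] with t ht
    have := hanti (left_mem_Icc.2 (by linarith [hm.1])) ⟨ht.1.le, ht.2⟩ ht.1
    rwa [h0] at this
  · obtain ⟨u, hu, hsub⟩ := mem_nhdsLT_iff_exists_Ioo_subset.1 hl
    have hm : (t₀ + u) / 2 < t₀ ∧ u < (t₀ + u) / 2 := by
      constructor <;> · simp only [mem_Iio] at hu; linarith
    have hmono : StrictMonoOn f (Icc ((t₀ + u) / 2) t₀) := by
      apply strictMonoOn_of_deriv_pos (convex_Icc _ _) hfc.continuousOn
      intro x hx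
      rw [interior_Icc] at hx
      rw [(hf x).deriv]
      exact hsub ⟨hm.2.trans hx.1, hx.2⟩
    filter_upwards [Ico_mem_nhdsLT hm.1] with t ht
    have := hmono ⟨ht.1, ht.2.le⟩ (right_mem_Icc.2 (by linarith [hm.1])) ht.2
    rwa [h0] at this

/-- First zero of a continuous function crossing from positive to negative values. -/
lemma first_zero {f : ℝ → ℝ} {a b : ℝ} (hab : a < b) (hf : Continuous f)
    (ha : 0 < f a) (hb : f b < 0) :
    ∃ t, t ∈ Ioo a b ∧ f t = 0 ∧ ∀ s ∈ Ico a t, 0 < f s := by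
  have hKne : (Icc a b ∩ f ⁻¹' {0}).Nonempty := by
    obtain ⟨t, htI, ht0⟩ := intermediate_value_Icc' hab.le hf.continuousOn
      (⟨hb.le, ha.le⟩ : (0:ℝ) ∈ Icc (f b) (f a))
    exact ⟨t, htI, ht0⟩
  have hKc : IsCompact (Icc a b ∩ f ⁻¹' {0}) :=
    isCompact_Icc.inter_right (isClosed_singleton.preimage hf)
  obtain ⟨t, htK, hleast⟩ := hKc.exists_isLeast hKne
  have htI : t ∈ Icc a b := htK.1
  have ht0 : f t = 0 := htK.2
  have hta : a < t := lt_of_le_of_ne htI.1 (by rintro rfl; exact absurd ht0 (ne_of_gt ha))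
  have htb : t < b := lt_of_le_of_ne htI.2 (by rintro rfl; exact absurd ht0 (ne_of_lt hb))
  refine ⟨t, ⟨hta, htb⟩, ht0, ?_⟩
  intro s hs
  by_contra hns
  push_neg at hns
  obtain ⟨u, huI, hu0⟩ := intermediate_value_Icc' hs.1 hf.continuousOn
    (⟨hns, ha.le⟩ : (0:ℝ) ∈ Icc (f s) (f a))
  have h1 : t ≤ u := hleast ⟨⟨huI.1, huI.2.trans (hs.2.le.trans htI.2)⟩, hu0⟩
  linarith [huI.2, hs.2]

/-- Comparison of two functions via their derivatives. -/
lemma deriv_comparison {f G A B : ℝ → ℝ} {a b : ℝ} (hab : a ≤ b)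
    (hf : ∀ t, HasDerivAt f (A t) t) (hG : ∀ t, HasDerivAt G (B t) t)
    (hAB : ∀ t ∈ Icc a b, A t ≤ B t) : f b - f a ≤ G b - G a := by
  have hdiff : ∀ t, HasDerivAt (fun s => G s - f s) (B t - A t) t := fun t => (hG t).sub (hf t)
  have hmono : MonotoneOn (fun s => G s - f s) (Icc a b) := by
    apply monotoneOn_of_deriv_nonneg (convex_Icc a b)
    · have : Differentiable ℝ (fun s => G s - f s) := fun t => (hdiff t).differentiableAt
      exact this.continuous.continuousOn
    · exact fun x _ => (hdiff x).differentiableAt.differentiableWithinAt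
    · intro x hx
      rw [(hdiff x).deriv]
      rw [interior_Icc] at hx
      exact sub_nonneg.2 (hAB x (Ioo_subset_Icc_self hx))
  have := hmono (left_mem_Icc.2 hab) (right_mem_Icc.2 hab) hab
  dsimp at this
  linarith


section BranchLemmas
variable {M : Type*} {φ : M → ℝ → M} {S Exit : Set M} {p : M}

lemma exitTimeGen_le {t : ℝ} (ht : 0 < t) (hExit : φ p t ∈ Exit)
    (hC1 : ¬ ∀ s : ℝ, 0 ≤ s → φ p s ∈ S) :
    exitTimeGen φ S Exit p ≤ ENNReal.ofReal t := by
  rw [exitTimeGen, if_neg hC1]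
  split_ifs with hC2
  · exact sInf_le ⟨t, ht, hExit, rfl⟩
  · exact zero_le

lemma le_exitTimeGen {b : ℝ} (hC2 : ∃ ε > (0:ℝ), ∀ t ∈ Icc (0:ℝ) ε, φ p t ∈ S)
    (hout : ∀ t : ℝ, 0 < t → φ p t ∈ Exit → b ≤ t) :
    ENNReal.ofReal b ≤ exitTimeGen φ S Exit p := by
  rw [exitTimeGen]
  by_cases hC1 : ∀ t : ℝ, 0 ≤ t → φ p t ∈ S
  · rw [if_pos hC1]; exact le_top
  · rw [if_neg hC1, if_pos hC2]
    refine le_sInf ?_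
    rintro s ⟨t, ht, hE, rfl⟩
    exact ENNReal.ofReal_le_ofReal (hout t ht hE)

lemma exitTimeGen_eq_zero (hC1 : ¬ ∀ s : ℝ, 0 ≤ s → φ p s ∈ S)
    (hC2 : ¬ ∃ ε > (0:ℝ), ∀ t ∈ Icc (0:ℝ) ε, φ p t ∈ S) :
    exitTimeGen φ S Exit p = 0 := by
  rw [exitTimeGen, if_neg hC1, if_neg hC2]

lemma exitTimeGen_eq_top (hC1 : ∀ s : ℝ, 0 ≤ s → φ p s ∈ S) :
    exitTimeGen φ S Exit p = ⊤ := by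
  rw [exitTimeGen, if_pos hC1]

end BranchLemmas

/-- Generic continuity theorem for the exit time, for a flow `φ` on a topological space,
with `h` the constraint function, `L` its derivative along the flow and `L2` the second
derivative, under the assumption that every point of `{h = 0}` is transversal or an
invisible fold. -/
theorem aux_continuousOn {M : Type*} [TopologicalSpace M]
    (φ : M → ℝ → M) (h L L2 : M → ℝ)
    (hφ0 : ∀ p, φ p 0 = p)
    (hgc : Continuous fun z : M × ℝ => h (φ z.1 z.2))
    (hLc : Continuous fun z : M × ℝ => L (φ z.1 z.2))
    (hgd : ∀ q t, HasDerivAt (fun s => h (φ q s)) (L (φ q t)) t)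
    (hLd : ∀ q t, HasDerivAt (fun s => L (φ q s)) (L2 (φ q t)) t)
    (htang : ∀ q, h q = 0 → L q ≠ 0 ∨ (L q = 0 ∧ L2 q < 0)) :
    ContinuousOn (exitTimeGen φ {p | 0 ≤ h p} {p | h p = 0 ∧ L p < 0}) {p | 0 ≤ h p} := by
  have hgqc : ∀ q, Continuous fun t => h (φ q t) := fun q => hgc.comp (Continuous.prodMk_right q)
  have hgd0 : ∀ q, HasDerivAt (fun s => h (φ q s)) (L q) 0 := fun q => by
    have := hgd q 0; rwa [hφ0] at this
  have hLd0 : ∀ q, HasDerivAt (fun s => L (φ q s)) (L2 q) 0 := fun q => by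
    have := hLd q 0; rwa [hφ0] at this
  have hg0 : ∀ q, h (φ q 0) = h q := fun q => by rw [hφ0]
  -- (A) after a zero with nonpositive slope, `h∘φ` becomes negative
  have lemA : ∀ q t₀, h (φ q t₀) = 0 → L (φ q t₀) ≤ 0 → ∀ᶠ t in 𝓝[>] t₀, h (φ q t) < 0 := by
    intro q t₀ h0 hL0
    rcases hL0.lt_or_eq with hlt | heq
    · exact (slope_sign' (hgd q t₀) h0 hlt).1
    · rcases htang (φ q t₀) h0 with hne | ⟨-, h2⟩
      · exact absurd heq hne
      · exact (second_deriv_sign (hgd q) (hLd q t₀) h0 heq h2).1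
  -- (A') before a zero with nonnegative slope, `h∘φ` is negative
  have lemA' : ∀ q t₀, h (φ q t₀) = 0 → 0 ≤ L (φ q t₀) → ∀ᶠ t in 𝓝[<] t₀, h (φ q t) < 0 := by
    intro q t₀ h0 hL0
    rcases hL0.lt_or_eq with hlt | heq
    · exact (slope_sign_pos' (hgd q t₀) h0 hlt).2
    · rcases htang (φ q t₀) h0 with hne | ⟨-, h2⟩
      · exact absurd heq.symm hne
      · exact (second_deriv_sign (hgd q) (hLd q t₀) h0 heq.symm h2).2
  -- (Pos) nonnegativity on a closed interval forces positivity inside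
  have lemPos : ∀ q b t, (∀ s ∈ Icc (0:ℝ) b, 0 ≤ h (φ q s)) → t ∈ Ioo (0:ℝ) b →
      0 < h (φ q t) := by
    intro q b t hnn ht
    rcases (hnn t ⟨ht.1.le, ht.2.le⟩).lt_or_eq with hpos | h0
    · exact hpos
    · exfalso
      replace h0 := h0.symm
      rcases le_or_gt (L (φ q t)) 0 with hL | hL
      · have hmem : ∀ᶠ s in 𝓝[>] t, s ∈ Ioc t b := Ioc_mem_nhdsGT ht.2
        obtain ⟨s, hs1, hs2⟩ := ((lemA q t h0 hL).and hmem).exists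
        exact absurd (hnn s ⟨(ht.1.trans hs2.1).le, hs2.2⟩) (not_le.2 hs1)
      · have hmem : ∀ᶠ s in 𝓝[<] t, s ∈ Ioo 0 t := Ioo_mem_nhdsLT ht.1
        obtain ⟨s, hs1, hs2⟩ := ((lemA' q t h0 hL.le).and hmem).exists
        exact absurd (hnn s ⟨hs2.1.le, (hs2.2.trans ht.2).le⟩) (not_le.2 hs1)
  -- (B) the first crossing is a transversal exit point
  have lemB : ∀ q a b, a < b → 0 < h (φ q a) → h (φ q b) < 0 →
      ∃ t, t ∈ Ioo a b ∧ h (φ q t) = 0 ∧ L (φ q t) < 0 ∧ ∀ s ∈ Ico a t, 0 < h (φ q s) := by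
    intro q a b hab ha hb
    obtain ⟨t, htI, ht0, hpos⟩ := first_zero hab (hgqc q) ha hb
    refine ⟨t, htI, ht0, ?_, hpos⟩
    by_contra hnl
    push_neg at hnl
    have hmem : ∀ᶠ s in 𝓝[<] t, s ∈ Ioo a t := Ioo_mem_nhdsLT htI.1
    obtain ⟨s, hs1, hs2⟩ := ((lemA' q t ht0 hnl).and hmem).exists
    exact absurd (hpos s ⟨hs2.1.le, hs2.2⟩) (not_lt.2 hs1.le)
  -- (U) upper bound on the exit time from a transversal exit point
  have lemU : ∀ q t, 0 < t → h (φ q t) = 0 → L (φ q t) < 0 →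
      exitTimeGen φ {p | 0 ≤ h p} {p | h p = 0 ∧ L p < 0} q ≤ ENNReal.ofReal t := by
    intro q t ht h0 hL
    refine exitTimeGen_le ht ⟨h0, hL⟩ ?_
    intro hall
    have hmem : ∀ᶠ s in 𝓝[>] t, s ∈ Ioi t := self_mem_nhdsWithin
    obtain ⟨s, hs1, hs2⟩ := ((lemA q t h0 hL.le).and hmem).exists
    exact absurd (hall s ((ht.trans hs2).le)) (not_le.2 hs1)
  -- (LB) lower bound on the exit time from positivity
  have lemLB : ∀ q b, 0 ≤ h q → 0 < b → (∀ t ∈ Ioo (0:ℝ) b, 0 < h (φ q t)) → 0 ≤ h (φ q b) →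
      ENNReal.ofReal b ≤ exitTimeGen φ {p | 0 ≤ h p} {p | h p = 0 ∧ L p < 0} q := by
    intro q b hq hb hpos hgb
    apply le_exitTimeGen
    · refine ⟨b, hb, fun t ht => ?_⟩
      rcases ht.1.eq_or_lt with he | hl
      · show (0:ℝ) ≤ h (φ q t); rw [← he, hφ0]; exact hq
      · rcases ht.2.lt_or_eq with h' | h'
        · exact (hpos t ⟨hl, h'⟩).le
        · show (0:ℝ) ≤ h (φ q t); rw [h']; exact hgb
    · intro t ht hE
      by_contra hlt
      push_neg at hlt
      exact absurd hE.1 (ne_of_gt (hpos t ⟨ht, hlt⟩))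
  -- (T0) immediate exit
  have lemT0 : ∀ q, h q = 0 → (∀ᶠ s in 𝓝[>] (0:ℝ), h (φ q s) < 0) →
      exitTimeGen φ {p | 0 ≤ h p} {p | h p = 0 ∧ L p < 0} q = 0 := by
    intro q h0 hev
    apply exitTimeGen_eq_zero
    · intro hall
      have hmem : ∀ᶠ s in 𝓝[>] (0:ℝ), s ∈ Ioi 0 := self_mem_nhdsWithin
      obtain ⟨s, hs1, hs2⟩ := (hev.and hmem).exists
      exact absurd (hall s (le_of_lt hs2)) (not_le.2 hs1)
    · rintro ⟨ε, hε, hall⟩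
      have hmem : ∀ᶠ s in 𝓝[>] (0:ℝ), s ∈ Ioc 0 ε := Ioc_mem_nhdsGT hε
      obtain ⟨s, hs1, hs2⟩ := (hev.and hmem).exists
      exact absurd (hall s ⟨hs2.1.le, hs2.2⟩) (not_le.2 hs1)
  -- (RN) at a boundary point which exits immediately, h∘φ is negative just after 0
  have lemRN : ∀ q, h q = 0 → L q < 0 ∨ (L q = 0 ∧ L2 q < 0) →
      ∀ᶠ s in 𝓝[>] (0:ℝ), h (φ q s) < 0 := by
    intro q h0 hc
    rcases hc with hL | ⟨hL, hL2⟩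
    · exact (slope_sign' (hgd0 q) ((hg0 q).trans h0) hL).1
    · refine (second_deriv_sign (hgd q) (hLd0 q) ((hg0 q).trans h0) ?_ hL2).1
      rw [hφ0]; exact hL
  -- (EB) if h∘φ is negative at time δ then the exit time is at most δ
  have lemEB : ∀ q δ, 0 < δ → 0 ≤ h q → h (φ q δ) < 0 →
      exitTimeGen φ {p | 0 ≤ h p} {p | h p = 0 ∧ L p < 0} q ≤ ENNReal.ofReal δ := by
    intro q δ hδ hq hneg
    rcases hq.lt_or_eq with hpos | h0
    · obtain ⟨τ, hτI, h0τ, hLτ, -⟩ := lemB q 0 δ hδ (by rw [hφ0]; exact hpos) hneg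
      exact (lemU q τ hτI.1 h0τ hLτ).trans (ENNReal.ofReal_le_ofReal hτI.2.le)
    · replace h0 := h0.symm
      rcases htang q h0 with hne | ⟨hL, hL2⟩
      · rcases hne.lt_or_gt with hneg' | hpos'
        · rw [lemT0 q h0 (lemRN q h0 (Or.inl hneg'))]; exact zero_le
        · have hev := (slope_sign_pos' (hgd0 q) ((hg0 q).trans h0) hpos').1
          have hmem : ∀ᶠ s in 𝓝[>] (0:ℝ), s ∈ Ioo 0 δ := Ioo_mem_nhdsGT hδ
          obtain ⟨a, ha1, ha2⟩ := (hev.and hmem).exists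
          obtain ⟨τ, hτI, h0τ, hLτ, -⟩ := lemB q a δ ha2.2 ha1 hneg
          exact (lemU q τ (ha2.1.trans hτI.1) h0τ hLτ).trans
            (ENNReal.ofReal_le_ofReal hτI.2.le)
      · rw [lemT0 q h0 (lemRN q h0 (Or.inr ⟨hL, hL2⟩))]; exact zero_le
  -- (C) the exit time formula when the trajectory eventually leaves
  have lemC : ∀ q, 0 ≤ h q → (0 < h q ∨ (h q = 0 ∧ 0 < L q)) →
      (∃ b, 0 < b ∧ h (φ q b) < 0) →
      ∃ τ, 0 < τ ∧ h (φ q τ) = 0 ∧ L (φ q τ) < 0 ∧ (∀ s ∈ Ioo (0:ℝ) τ, 0 < h (φ q s)) ∧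
        exitTimeGen φ {p | 0 ≤ h p} {p | h p = 0 ∧ L p < 0} q = ENNReal.ofReal τ := by
    intro q hq hcase hex
    obtain ⟨b, hb, hgb⟩ := hex
    have hev : ∀ᶠ s in 𝓝[>] (0:ℝ), 0 < h (φ q s) := by
      rcases hcase with hpos | ⟨h0, hL⟩
      · have h1 : ∀ᶠ s in 𝓝 (0:ℝ), 0 < h (φ q s) :=
          (hgqc q).continuousAt.eventually_mem (Ioi_mem_nhds (by rw [hφ0]; exact hpos))
        exact h1.filter_mono nhdsWithin_le_nhds
      · exact (slope_sign_pos' (hgd0 q) ((hg0 q).trans h0) hL).1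
    obtain ⟨u, hu, hsub⟩ := mem_nhdsGT_iff_exists_Ioc_subset.1 hev
    rw [mem_Ioi] at hu
    have hmin : 0 < min u b := lt_min hu hb
    have ha0 : 0 < min u b / 2 := half_pos hmin
    have hau : min u b / 2 ≤ u := (half_le_self hmin.le).trans (min_le_left _ _)
    have hab : min u b / 2 < b := lt_of_lt_of_le (half_lt_self hmin) (min_le_right _ _)
    have hga : 0 < h (φ q (min u b / 2)) := hsub ⟨ha0, hau⟩
    obtain ⟨τ, hτI, h0τ, hLτ, hpos⟩ := lemB q (min u b / 2) b hab hga hgb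
    have hpos' : ∀ s ∈ Ioo (0:ℝ) τ, 0 < h (φ q s) := by
      intro s hs
      rcases le_or_gt s (min u b / 2) with hsa | hsa
      · exact hsub ⟨hs.1, hsa.trans hau⟩
      · exact hpos s ⟨hsa.le, hs.2⟩
    have hτ0 : 0 < τ := ha0.trans hτI.1
    exact ⟨τ, hτ0, h0τ, hLτ, hpos',
      le_antisymm (lemU q τ hτ0 h0τ hLτ) (lemLB q τ hq hτ0 hpos' (le_of_eq h0τ.symm))⟩
  -- (Low) eventual lower bound
  have lemLow : ∀ p, 0 ≤ h p → (0 < h p ∨ (h p = 0 ∧ 0 < L p)) → ∀ β, 0 < β →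
      (∀ s ∈ Ioc (0:ℝ) β, 0 < h (φ p s)) →
      ∀ᶠ q in 𝓝[{p | 0 ≤ h p}] p,
        ENNReal.ofReal β ≤ exitTimeGen φ {p | 0 ≤ h p} {p | h p = 0 ∧ L p < 0} q := by
    intro p hp hcase β hβ hpos
    rcases hcase with hppos | ⟨h0, hLp⟩
    · have hpos' : ∀ t ∈ Icc (0:ℝ) β, 0 < h (φ p t) := by
        intro t ht
        rcases ht.1.eq_or_lt with he | hl
        · rw [← he, hφ0]; exact hppos
        · exact hpos t ⟨hl, ht.2⟩
      have hev : ∀ᶠ q in 𝓝 p, ∀ t ∈ Icc (0:ℝ) β, 0 < h (φ q t) :=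
        isCompact_Icc.eventually_forall_of_forall_eventually (fun t ht =>
          hgc.continuousAt.eventually_mem (Ioi_mem_nhds (hpos' t ht)))
      filter_upwards [eventually_nhdsWithin_of_eventually_nhds hev, self_mem_nhdsWithin]
        with q hq hqS
      exact lemLB q β hqS hβ (fun t ht => hq t ⟨ht.1.le, ht.2.le⟩) (hq β ⟨hβ.le, le_refl β⟩).le
    · have hc0 : 0 < L p / 2 := half_pos hLp
      have hevt : ∀ᶠ t in 𝓝 (0:ℝ), L p / 2 < L (φ p t) :=
        (hLc.comp (Continuous.prodMk_right p)).continuousAt.eventually_mem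
          (Ioi_mem_nhds (show L p / 2 < L (φ p 0) by rw [hφ0]; exact half_lt_self hLp))
      obtain ⟨ε, hε0, hεsub⟩ := Metric.eventually_nhds_iff.1 hevt
      have hδ0 : 0 < min (ε/2) β := lt_min (half_pos hε0) hβ
      have hδβ : min (ε/2) β ≤ β := min_le_right _ _
      have hδε : ∀ t ∈ Icc (0:ℝ) (min (ε/2) β), L p / 2 < L (φ p t) := by
        intro t ht
        apply hεsub
        rw [Real.dist_eq, sub_zero, abs_of_nonneg ht.1]
        have := ht.2
        have h2 := min_le_left (ε/2) β
        linarith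
      have hev1 : ∀ᶠ q in 𝓝 p, ∀ t ∈ Icc (0:ℝ) (min (ε/2) β), L p / 2 < L (φ q t) :=
        isCompact_Icc.eventually_forall_of_forall_eventually (fun t ht =>
          hLc.continuousAt.eventually_mem (Ioi_mem_nhds (hδε t ht)))
      have hpos2 : ∀ t ∈ Icc (min (ε/2) β) β, 0 < h (φ p t) := fun t ht =>
        hpos t ⟨lt_of_lt_of_le hδ0 ht.1, ht.2⟩
      have hev2 : ∀ᶠ q in 𝓝 p, ∀ t ∈ Icc (min (ε/2) β) β, 0 < h (φ q t) :=
        isCompact_Icc.eventually_forall_of_forall_eventually (fun t ht =>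
          hgc.continuousAt.eventually_mem (Ioi_mem_nhds (hpos2 t ht)))
      filter_upwards [eventually_nhdsWithin_of_eventually_nhds hev1,
        eventually_nhdsWithin_of_eventually_nhds hev2, self_mem_nhdsWithin]
        with q hq1 hq2 hqS
      have hqS' : (0:ℝ) ≤ h q := hqS
      have hstep : ∀ t, t ∈ Ioc (0:ℝ) (min (ε/2) β) → 0 < h (φ q t) := by
        intro t ht
        have hcomp := deriv_comparison (f := fun s => (L p / 2) * s) (G := fun s => h (φ q s))
          (A := fun _ => L p / 2) (B := fun s => L (φ q s)) ht.1.le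
          (fun s => by simpa using (hasDerivAt_id s).const_mul (L p / 2)) (hgd q)
          (fun s hs => (hq1 s ⟨hs.1, hs.2.trans ht.2⟩).le)
        have hq0 : h (φ q 0) = h q := hg0 q
        have hmul : 0 < (L p / 2) * t := mul_pos hc0 ht.1
        have hcomp' : L p / 2 * t - L p / 2 * 0 ≤ h (φ q t) - h (φ q 0) := hcomp
        nlinarith
      apply lemLB q β hqS' hβ
      · intro t ht
        rcases le_or_gt t (min (ε/2) β) with hle | hlt
        · exact hstep t ⟨ht.1, hle⟩
        · exact hq2 t ⟨hlt.le, ht.2.le⟩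
      · exact (hq2 β ⟨hδβ, le_refl β⟩).le
  -- main proof
  intro p hp
  have hp' : (0:ℝ) ≤ h p := hp
  refine tendsto_order.2 ⟨?_, ?_⟩
  · -- lower semicontinuity
    intro b hb
    have hcase : 0 < h p ∨ (h p = 0 ∧ 0 < L p) := by
      rcases hp'.lt_or_eq with hpos | h0
      · exact Or.inl hpos
      · replace h0 := h0.symm
        refine Or.inr ⟨h0, ?_⟩
        by_contra hnp
        push_neg at hnp
        have hzero : exitTimeGen φ {p | 0 ≤ h p} {p | h p = 0 ∧ L p < 0} p = 0 := by
          apply lemT0 p h0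
          apply lemRN p h0
          rcases hnp.lt_or_eq with hlt | heq
          · exact Or.inl hlt
          · rcases htang p h0 with hne | ⟨hL, hL2⟩
            · exact absurd heq hne
            · exact Or.inr ⟨hL, hL2⟩
        rw [hzero] at hb
        exact absurd hb (by simp)
    by_cases hNeg : ∃ t, 0 < t ∧ h (φ p t) < 0
    · obtain ⟨τ, hτ0, h0τ, hLτ, hposτ, hval⟩ := lemC p hp' hcase hNeg
      rw [hval] at hb
      obtain ⟨r, hr0, hbr, hrτ⟩ := ENNReal.lt_iff_exists_real_btwn.1 hb
      have hrτ' : r < τ := (ENNReal.ofReal_lt_ofReal_iff_of_nonneg hr0).1 hrτ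
      have hrpos : 0 < r := by
        by_contra hr
        push_neg at hr
        rw [ENNReal.ofReal_eq_zero.2 hr] at hbr
        exact absurd hbr (by simp)
      have := lemLow p hp' hcase r hrpos (fun s hs => hposτ s ⟨hs.1, lt_of_le_of_lt hs.2 hrτ'⟩)
      exact this.mono fun q hq => lt_of_lt_of_le hbr hq
    · push_neg at hNeg
      have hbne : b ≠ ⊤ := hb.ne_top
      have hr0 : (0:ℝ) < b.toReal + 1 := by positivity
      have hbr : b < ENNReal.ofReal (b.toReal + 1) :=
        (ENNReal.lt_ofReal_iff_toReal_lt hbne).2 (lt_add_one _)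
      have hpos' : ∀ s ∈ Ioc (0:ℝ) (b.toReal + 1), 0 < h (φ p s) := by
        intro s hs
        refine lemPos p (b.toReal + 2) s ?_ ⟨hs.1, by linarith [hs.2]⟩
        intro u hu
        rcases hu.1.eq_or_lt with he | hl
        · rw [← he, hφ0]; exact hp'
        · exact hNeg u hl
      have := lemLow p hp' hcase (b.toReal + 1) hr0 hpos'
      exact this.mono fun q hq => lt_of_lt_of_le hbr hq
  · -- upper semicontinuity
    intro b hb
    have hb0 : (0:ℝ≥0∞) < b := lt_of_le_of_lt (zero_le) hb
    obtain ⟨r, hrpos, hrb⟩ : ∃ r : ℝ, 0 < r ∧ ENNReal.ofReal r < b := by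
      rcases eq_or_ne b ⊤ with rfl | hbt
      · exact ⟨1, one_pos, ENNReal.ofReal_lt_top⟩
      · have htR : 0 < b.toReal := ENNReal.toReal_pos hb0.ne' hbt
        refine ⟨b.toReal / 2, by positivity, ?_⟩
        rw [ENNReal.ofReal_lt_iff_lt_toReal (by positivity) hbt]
        linarith
    by_cases hbd : h p = 0 ∧ (L p < 0 ∨ (L p = 0 ∧ L2 p < 0))
    · obtain ⟨h0, hcs⟩ := hbd
      have hev := lemRN p h0 hcs
      have hmem : ∀ᶠ s in 𝓝[>] (0:ℝ), s ∈ Ioo 0 r := Ioo_mem_nhdsGT hrpos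
      obtain ⟨δ, hδ1, hδ2⟩ := (hev.and hmem).exists
      have hev2 : ∀ᶠ q in 𝓝 p, h (φ q δ) < 0 :=
        (hgc.comp (continuous_id.prodMk continuous_const)).continuousAt.eventually_mem
          (Iio_mem_nhds hδ1)
      filter_upwards [eventually_nhdsWithin_of_eventually_nhds hev2, self_mem_nhdsWithin]
        with q hq hqS
      calc exitTimeGen φ {p | 0 ≤ h p} {p | h p = 0 ∧ L p < 0} q
          ≤ ENNReal.ofReal δ := lemEB q δ hδ2.1 hqS hq
        _ ≤ ENNReal.ofReal r := ENNReal.ofReal_le_ofReal hδ2.2.le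
        _ < b := hrb
    · have hcase : 0 < h p ∨ (h p = 0 ∧ 0 < L p) := by
        rcases hp'.lt_or_eq with hpos | h0
        · exact Or.inl hpos
        · replace h0 := h0.symm
          refine Or.inr ⟨h0, ?_⟩
          rcases htang p h0 with hne | ⟨hL, hL2⟩
          · rcases hne.lt_or_gt with hlt | hgt
            · exact absurd ⟨h0, Or.inl hlt⟩ hbd
            · exact hgt
          · exact absurd ⟨h0, Or.inr ⟨hL, hL2⟩⟩ hbd
      by_cases hNeg : ∃ t, 0 < t ∧ h (φ p t) < 0
      · obtain ⟨τ, hτ0, h0τ, hLτ, hposτ, hval⟩ := lemC p hp' hcase hNeg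
        rw [hval] at hb
        obtain ⟨r', hr'0, hτr, hr'b⟩ := ENNReal.lt_iff_exists_real_btwn.1 hb
        have hτr' : τ < r' := (ENNReal.ofReal_lt_ofReal_iff_of_nonneg hτ0.le).1 hτr
        have hev := (slope_sign' (hgd p τ) h0τ hLτ).1
        have hmem : ∀ᶠ s in 𝓝[>] τ, s ∈ Ioo τ r' := Ioo_mem_nhdsGT hτr'
        obtain ⟨δ, hδ1, hδ2⟩ := (hev.and hmem).exists
        have hδpos : 0 < δ := hτ0.trans hδ2.1
        have hev2 : ∀ᶠ q in 𝓝 p, h (φ q δ) < 0 :=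
          (hgc.comp (continuous_id.prodMk continuous_const)).continuousAt.eventually_mem
            (Iio_mem_nhds hδ1)
        filter_upwards [eventually_nhdsWithin_of_eventually_nhds hev2, self_mem_nhdsWithin]
          with q hq hqS
        calc exitTimeGen φ {p | 0 ≤ h p} {p | h p = 0 ∧ L p < 0} q
            ≤ ENNReal.ofReal δ := lemEB q δ hδpos hqS hq
          _ ≤ ENNReal.ofReal r' := ENNReal.ofReal_le_ofReal hδ2.2.le
          _ < b := hr'b
      · push_neg at hNeg
        exfalso
        have htop : exitTimeGen φ {p | 0 ≤ h p} {p | h p = 0 ∧ L p < 0} p = ⊤ := by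
          apply exitTimeGen_eq_top
          intro s hs
          rcases hs.eq_or_lt with he | hl
          · show (0:ℝ) ≤ h (φ p s); rw [← he, hφ0]; exact hp'
          · exact hNeg s hl
        rw [htop] at hb
        exact not_top_lt hb


lemma contMDiff_tangent_snd :
    ContMDiff 𝓘(ℝ, ℝ).tangent 𝓘(ℝ, ℝ) (⊤ : ℕ∞) (fun z : TangentBundle 𝓘(ℝ, ℝ) ℝ => z.2) := by
  refine contMDiff_iff.2 ⟨continuous_snd.comp (tangentBundleModelSpaceHomeomorph 𝓘(ℝ, ℝ)).continuous, ?_⟩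
  intro x y
  refine ContDiffOn.congr (f := (Prod.snd : ℝ × ℝ → ℝ)) contDiff_snd.contDiffOn ?_
  intro z hz
  simp [mfld_simps]
  rfl

lemma lieDeriv_contMDiff (I : ModelWithCorners ℝ E H) [IsManifold I (⊤ : ℕ∞) M]
    (X : (p : M) → TangentSpace I p)
    (hX : ContMDiff I I.tangent (⊤ : ℕ∞) (fun p => (⟨p, X p⟩ : TangentBundle I M)))
    {f : M → ℝ} (hf : ContMDiff I 𝓘(ℝ, ℝ) (⊤ : ℕ∞) f) :
    ContMDiff I 𝓘(ℝ, ℝ) (⊤ : ℕ∞) (lieDeriv I X f) := by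
  have h1 : ContMDiff I.tangent 𝓘(ℝ, ℝ).tangent (⊤ : ℕ∞) (tangentMap I 𝓘(ℝ, ℝ) f) :=
    hf.contMDiff_tangentMap (by simp)
  exact contMDiff_tangent_snd.comp (h1.comp hX)

lemma lieDeriv_hasDerivAt (I : ModelWithCorners ℝ E H) [IsManifold I (⊤ : ℕ∞) M]
    (X : (p : M) → TangentSpace I p) (φ : M → ℝ → M)
    (hφODE : ∀ p t, HasMFDerivAt 𝓘(ℝ, ℝ) I (φ p) t
      ((ContinuousLinearMap.id ℝ ℝ).smulRight (X (φ p t))))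
    {f : M → ℝ} (hf : ContMDiff I 𝓘(ℝ, ℝ) (⊤ : ℕ∞) f) (q : M) (t : ℝ) :
    HasDerivAt (fun s => f (φ q s)) (lieDeriv I X f (φ q t)) t := by
  have h1 : HasMFDerivAt 𝓘(ℝ, ℝ) 𝓘(ℝ, ℝ) (f ∘ φ q) t
      ((mfderiv I 𝓘(ℝ, ℝ) f (φ q t)).comp
        ((ContinuousLinearMap.id ℝ ℝ).smulRight (X (φ q t)))) :=
    HasMFDerivAt.comp t ((hf.mdifferentiableAt (by simp)).hasMFDerivAt) (hφODE q t)
  rw [hasMFDerivAt_iff_hasFDerivAt] at h1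
  have h1' : HasFDerivAt (f ∘ φ q) (((mfderiv I 𝓘(ℝ, ℝ) f (φ q t)).comp
      ((ContinuousLinearMap.id ℝ ℝ).smulRight (X (φ q t)))) : ℝ →L[ℝ] ℝ) t := h1
  have h2 : HasDerivAt (f ∘ φ q) ((((mfderiv I 𝓘(ℝ, ℝ) f (φ q t)).comp
      ((ContinuousLinearMap.id ℝ ℝ).smulRight (X (φ q t)))) : ℝ →L[ℝ] ℝ) 1) t :=
    @HasFDerivAt.hasDerivAt _ _ _ _ _ _ _ _ ContinuousMul.to_continuousSMul _ h1'
  have h3 : (((mfderiv I 𝓘(ℝ, ℝ) f (φ q t)).comp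
      ((ContinuousLinearMap.id ℝ ℝ).smulRight (X (φ q t)))) 1)
      = mfderiv I 𝓘(ℝ, ℝ) f (φ q t) (X (φ q t)) := by
    rw [ContinuousLinearMap.comp_apply, ContinuousLinearMap.smulRight_apply,
      ContinuousLinearMap.id_apply, one_smul]
  rw [h3] at h2
  exact h2

theorem exitTimePlus_continuousOn_of_no_visible_tangency
    (I : ModelWithCorners ℝ E H) [I.Boundaryless] [IsManifold I (⊤ : ℕ∞) M]
    [CompactSpace M] [T2Space M] [FiniteDimensional ℝ E]
    (hdim : Module.finrank ℝ E = 3)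
    (h : M → ℝ) (hsmooth : ContMDiff I 𝓘(ℝ, ℝ) (⊤ : ℕ∞) h)
    (hreg : ∀ p : M, h p = 0 → mfderiv I 𝓘(ℝ, ℝ) h p ≠ 0)
    (X : (p : M) → TangentSpace I p)
    (hXsmooth : ContMDiff I I.tangent (⊤ : ℕ∞) (fun p => (⟨p, X p⟩ : TangentBundle I M)))
    (φX : M → ℝ → M)
    (hφcont : Continuous fun q : M × ℝ => φX q.1 q.2)
    (hφ0 : ∀ p, φX p 0 = p)
    (hφadd : ∀ p s t, φX (φX p s) t = φX p (s + t))
    (hφODE : ∀ p t, HasMFDerivAt 𝓘(ℝ, ℝ) I (φX p) t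
      ((ContinuousLinearMap.id ℝ ℝ).smulRight (X (φX p t))))
    -- Σ = Σ_X ∪ S_X^i : every point of Σ is transversal for X or an invisible fold of X
    (htang : ∀ p : M, h p = 0 →
      (lieDeriv I X h p ≠ 0 ∨
        (lieDeriv I X h p = 0 ∧ lieDeriv I X (lieDeriv I X h) p < 0))) :
    ContinuousOn (exitTimePlus I X φX h) {p : M | 0 ≤ h p} := by
  have hcusps : invisibleCusps I X h = ∅ := by
    ext q
    simp only [invisibleCusps, mem_setOf_eq, mem_empty_iff_false, iff_false]
    rintro ⟨hq, hL, hL2, -, -⟩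
    rcases htang q hq with hne | ⟨-, hlt⟩
    · exact hne hL
    · exact absurd hL2 (ne_of_lt hlt)
  have hLsm := lieDeriv_contMDiff I X hXsmooth hsmooth
  have heq : exitTimePlus I X φX h = exitTimeGen φX {p : M | 0 ≤ h p}
      {p : M | h p = 0 ∧ lieDeriv I X h p < 0} := by
    simp only [exitTimePlus, hcusps, empty_union]
  rw [heq]
  exact aux_continuousOn φX h (lieDeriv I X h) (lieDeriv I X (lieDeriv I X h)) hφ0
    (hsmooth.continuous.comp hφcont) (hLsm.continuous.comp hφcont)
    (fun q t => lieDeriv_hasDerivAt I X φX hφODE hsmooth q t)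
    (fun q t => lieDeriv_hasDerivAt I X φX hφODE hLsm q t)
    htang
end
end

section
/- Let p ∈ ℝ³ satisfy Xh(p) = 0, X²h(p) = 0 and Yh(p) > 0. Then (Z^s)(Xh)(p) = 0 and (Z^s)²(Xh)(p) = X³h(p). In particular, if p is an invisible cusp of X (X³h(p) < 0) then p is a fold point of the vector field Z^s with respect to the function Xh with (Z^s)²(Xh)(p) < 0 (i.e., a visible fold of Z^s relative to the region {Xh ≤ 0}), and if X³h(p) > 0 (visible cusp of X) then (Z^s)²(Xh)(p) > 0 (an invisible fold of Z^s). -/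
/- STATEMENT 3: at a point p with Xh(p) = X²h(p) = 0 and Yh(p) > 0 one has
(Z^s)(Xh)(p) = 0 and (Z^s)²(Xh)(p) = X³h(p); in particular at an invisible cusp of X
(X³h(p) < 0) the point p is a fold point of Z^s relative to Xh with (Z^s)²(Xh)(p) < 0,
and at a visible cusp (X³h(p) > 0) one has (Z^s)²(Xh)(p) > 0. -/

open scoped RealInnerProductSpace
open Set

noncomputable section

abbrev R3 := EuclideanSpace ℝ (Fin 3)

/-- The derivative of `f` at `p` in the direction `W(p)`: `Wf(p) = ⟨W(p), ∇f(p)⟩`. -/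
def dirDeriv (W : R3 → R3) (f : R3 → ℝ) : R3 → ℝ :=
  fun p => ⟪W p, gradient f p⟫

/-- The sliding vector field `Z^s = (Yh·X − Xh·Y)/(Yh − Xh)`. -/
def slidingVF (X Y : R3 → R3) (h : R3 → ℝ) : R3 → R3 :=
  fun q => (dirDeriv Y h q - dirDeriv X h q)⁻¹ •
    (dirDeriv Y h q • X q - dirDeriv X h q • Y q)

lemma dirDeriv_eq_fderiv (W : R3 → R3) (f : R3 → ℝ) (q : R3) :
    dirDeriv W f q = fderiv ℝ f q (W q) := by
  rw [dirDeriv, real_inner_comm, gradient, InnerProductSpace.toDual_symm_apply]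

lemma contDiff_dirDeriv {W : R3 → R3} {f : R3 → ℝ}
    (hW : ContDiff ℝ (⊤ : ℕ∞) W) (hf : ContDiff ℝ (⊤ : ℕ∞) f) : ContDiff ℝ (⊤ : ℕ∞) (dirDeriv W f) := by
  have e : dirDeriv W f = fun q => fderiv ℝ f q (W q) := funext fun q => dirDeriv_eq_fderiv W f q
  rw [e]
  exact (hf.fderiv_right (by simp)).clm_apply hW

lemma sliding_formula (X Y : R3 → R3) (h : R3 → ℝ) (f : R3 → ℝ) (q : R3) :
    dirDeriv (slidingVF X Y h) f q =
      (dirDeriv Y h q - dirDeriv X h q)⁻¹ *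
        (dirDeriv Y h q * dirDeriv X f q - dirDeriv X h q * dirDeriv Y f q) := by
  simp only [dirDeriv, slidingVF, inner_sub_left, real_inner_smul_left]

theorem sliding_second_lieDeriv_at_cusp
    (X Y : R3 → R3) (h : R3 → ℝ)
    (hX : ContDiff ℝ (⊤ : ℕ∞) X) (hY : ContDiff ℝ (⊤ : ℕ∞) Y) (hh : ContDiff ℝ (⊤ : ℕ∞) h)
    (p : R3) (hXh : dirDeriv X h p = 0)
    (hX2h : dirDeriv X (dirDeriv X h) p = 0) (hYh : 0 < dirDeriv Y h p) :
    dirDeriv (slidingVF X Y h) (dirDeriv X h) p = 0 ∧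
    dirDeriv (slidingVF X Y h) (dirDeriv (slidingVF X Y h) (dirDeriv X h)) p =
      dirDeriv X (dirDeriv X (dirDeriv X h)) p ∧
    (dirDeriv X (dirDeriv X (dirDeriv X h)) p < 0 →
      dirDeriv (slidingVF X Y h) (dirDeriv (slidingVF X Y h) (dirDeriv X h)) p < 0) ∧
    (0 < dirDeriv X (dirDeriv X (dirDeriv X h)) p →
      0 < dirDeriv (slidingVF X Y h) (dirDeriv (slidingVF X Y h) (dirDeriv X h)) p) := by
  have hc0 : dirDeriv Y h p ≠ 0 := ne_of_gt hYh
  have hXH : ContDiff ℝ (⊤ : ℕ∞) (dirDeriv X h) := contDiff_dirDeriv hX hh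
  have hYH : ContDiff ℝ (⊤ : ℕ∞) (dirDeriv Y h) := contDiff_dirDeriv hY hh
  have hXf : ContDiff ℝ (⊤ : ℕ∞) (dirDeriv X (dirDeriv X h)) := contDiff_dirDeriv hX hXH
  have hYf : ContDiff ℝ (⊤ : ℕ∞) (dirDeriv Y (dirDeriv X h)) := contDiff_dirDeriv hY hXH
  have h1 : dirDeriv (slidingVF X Y h) (dirDeriv X h) p = 0 := by
    rw [sliding_formula, hXh, hX2h]; ring
  have h2 : dirDeriv (slidingVF X Y h) (dirDeriv (slidingVF X Y h) (dirDeriv X h)) p =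
      dirDeriv X (dirDeriv X (dirDeriv X h)) p := by
    have hZp : slidingVF X Y h p = X p := by
      simp only [slidingVF, hXh, sub_zero, zero_smul, smul_smul, inv_mul_cancel₀ hc0, one_smul]
    rw [dirDeriv_eq_fderiv, hZp]
    have hgfun : dirDeriv (slidingVF X Y h) (dirDeriv X h) =
        fun q => (dirDeriv Y h q - dirDeriv X h q)⁻¹ *
          (dirDeriv Y h q * dirDeriv X (dirDeriv X h) q -
            dirDeriv X h q * dirDeriv Y (dirDeriv X h) q) :=
      funext fun q => sliding_formula X Y h (dirDeriv X h) q
    rw [hgfun]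
    have hAd : DifferentiableAt ℝ (fun q => dirDeriv Y h q - dirDeriv X h q) p :=
      ((hYH.sub hXH).differentiable (by simp)) p
    have hAp : dirDeriv Y h p - dirDeriv X h p ≠ 0 := by rw [hXh, sub_zero]; exact hc0
    have hAinv : DifferentiableAt ℝ (fun q => (dirDeriv Y h q - dirDeriv X h q)⁻¹) p :=
      hAd.inv hAp
    have hBY : DifferentiableAt ℝ (fun q => dirDeriv Y h q * dirDeriv X (dirDeriv X h) q) p :=
      ((hYH.mul hXf).differentiable (by simp)) p
    have hBX : DifferentiableAt ℝ (fun q => dirDeriv X h q * dirDeriv Y (dirDeriv X h) q) p :=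
      ((hXH.mul hYf).differentiable (by simp)) p
    have hBd : DifferentiableAt ℝ (fun q => dirDeriv Y h q * dirDeriv X (dirDeriv X h) q -
        dirDeriv X h q * dirDeriv Y (dirDeriv X h) q) p := hBY.sub hBX
    have hYHd : DifferentiableAt ℝ (dirDeriv Y h) p := (hYH.differentiable (by simp)) p
    have hXHd : DifferentiableAt ℝ (dirDeriv X h) p := (hXH.differentiable (by simp)) p
    have hXfd : DifferentiableAt ℝ (dirDeriv X (dirDeriv X h)) p := (hXf.differentiable (by simp)) p
    have hYfd : DifferentiableAt ℝ (dirDeriv Y (dirDeriv X h)) p := (hYf.differentiable (by simp)) p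
    have e1 : fderiv ℝ (dirDeriv X (dirDeriv X h)) p (X p) =
        dirDeriv X (dirDeriv X (dirDeriv X h)) p :=
      (dirDeriv_eq_fderiv X (dirDeriv X (dirDeriv X h)) p).symm
    have e2 : fderiv ℝ (dirDeriv X h) p (X p) = dirDeriv X (dirDeriv X h) p :=
      (dirDeriv_eq_fderiv X (dirDeriv X h) p).symm
    rw [fderiv_fun_mul hAinv hBd]
    simp only [ContinuousLinearMap.add_apply, ContinuousLinearMap.smul_apply,
      ContinuousLinearMap.sub_apply, smul_eq_mul, fderiv_fun_sub hBY hBX,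
      fderiv_fun_mul hYHd hXfd, fderiv_fun_mul hXHd hYfd, e1, e2, hXh, hX2h]
    rw [sub_zero, mul_zero, zero_mul, zero_mul, mul_zero, zero_mul, sub_zero, add_zero,
      add_zero, sub_zero, zero_mul, inv_mul_cancel_left₀ hc0, add_zero]
  exact ⟨h1, h2, fun hn => h2 ▸ (h2.symm ▸ hn), fun hp' => by rw [h2]; exact hp'⟩
end
end

section
/- Assume that for every p ∈ Σ one has (Xh(p), X²h(p), X³h(p)) ≠ (0,0,0), i.e., every point of Σ is either transversal for X, or a tangency of order 2 (fold), or a tangency of order 3 (cusp). Then for every p ∈ M the set {t ∈ ℝ : φ_X(p,t) ∈ Σ} is a discrete subset of ℝ; in particular every orbit of X meets Σ (and hence the boundary of Σ⁺) in a discrete set of points. -/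
/- STATEMENT 4: if at every point of Σ = h⁻¹(0) one has
(Xh(p), X²h(p), X³h(p)) ≠ (0,0,0), then for every p ∈ M the set of times at which
the orbit of X through p meets Σ is a discrete subset of ℝ. -/

open scoped Manifold ENNReal
open Set

noncomputable section

variable {E H M : Type*} [NormedAddCommGroup E] [NormedSpace ℝ E]
  [TopologicalSpace H] [TopologicalSpace M] [ChartedSpace H M]

open Filter Topology in
/-- If `g` vanishes at `t0` with nonzero derivative, then `g` is nonzero on a punctured
neighbourhood of `t0`. -/
lemma aux_ev_ne_of_hasDerivAt {g : ℝ → ℝ} {t0 d : ℝ} (hg : HasDerivAt g d t0)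
    (h0 : g t0 = 0) (hd : d ≠ 0) : ∀ᶠ t in 𝓝[≠] t0, g t ≠ 0 := by
  rw [hasDerivAt_iff_tendsto_slope] at hg
  have h1 : ∀ᶠ t in 𝓝[≠] t0, slope g t0 t ≠ 0 := hg (isOpen_ne.mem_nhds hd)
  filter_upwards [h1, self_mem_nhdsWithin] with t ht ht0
  intro hgt
  apply ht
  simp [slope_def_field, hgt, h0]

open Filter Topology in
/-- Rolle: if a differentiable `g` vanishes at `t0` and its derivative is nonzero on a
punctured neighbourhood of `t0`, then `g` is nonzero on a punctured neighbourhood. -/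
lemma aux_ev_ne_of_deriv_ev_ne {g : ℝ → ℝ} (hg : Differentiable ℝ g) {t0 : ℝ}
    (h0 : g t0 = 0) (hd : ∀ᶠ t in 𝓝[≠] t0, deriv g t ≠ 0) :
    ∀ᶠ t in 𝓝[≠] t0, g t ≠ 0 := by
  obtain ⟨ε, hε, hball⟩ := Metric.mem_nhdsWithin_iff.mp hd
  rw [Filter.Eventually, Metric.mem_nhdsWithin_iff]
  refine ⟨ε, hε, fun t htmem => ?_⟩
  simp only [mem_inter_iff, Metric.mem_ball, mem_compl_iff, mem_singleton_iff] at htmem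
  obtain ⟨hdist, ht0⟩ := htmem
  intro hgt
  rcases lt_or_gt_of_ne ht0 with hlt | hgt'
  · obtain ⟨c, hc, hc0⟩ := exists_deriv_eq_zero hlt (hg.continuous.continuousOn)
      (by rw [h0, hgt])
    refine hball (a := c) ⟨?_, by simpa using ne_of_lt hc.2⟩ hc0
    rw [Real.dist_eq, abs_lt] at hdist
    simp only [Metric.mem_ball, Real.dist_eq, abs_lt]
    constructor <;> nlinarith [hc.1, hc.2]
  · obtain ⟨c, hc, hc0⟩ := exists_deriv_eq_zero hgt' (hg.continuous.continuousOn)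
      (by rw [h0, hgt])
    refine hball (a := c) ⟨?_, by simpa using ne_of_gt hc.1⟩ hc0
    rw [Real.dist_eq, abs_lt] at hdist
    simp only [Metric.mem_ball, Real.dist_eq, abs_lt]
    constructor <;> nlinarith [hc.1, hc.2]

open Filter Topology in
/-- A zero of `f0` where not all of the first three derivatives vanish is isolated. -/
lemma aux_key_isolated {f0 f1 f2 f3 : ℝ → ℝ}
    (h01 : ∀ t, HasDerivAt f0 (f1 t) t) (h12 : ∀ t, HasDerivAt f1 (f2 t) t)
    (h23 : ∀ t, HasDerivAt f2 (f3 t) t) {t0 : ℝ} (h0 : f0 t0 = 0)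
    (hne : ¬(f1 t0 = 0 ∧ f2 t0 = 0 ∧ f3 t0 = 0)) :
    ∀ᶠ t in 𝓝[≠] t0, f0 t ≠ 0 := by
  have hd0 : Differentiable ℝ f0 := fun t => (h01 t).differentiableAt
  have hd1 : Differentiable ℝ f1 := fun t => (h12 t).differentiableAt
  have e0 : deriv f0 = f1 := funext fun t => (h01 t).deriv
  have e1 : deriv f1 = f2 := funext fun t => (h12 t).deriv
  by_cases H1 : f1 t0 = 0
  · by_cases H2 : f2 t0 = 0
    · have H3 : f3 t0 ≠ 0 := fun h3 => hne ⟨H1, H2, h3⟩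
      have e2 : ∀ᶠ t in 𝓝[≠] t0, f2 t ≠ 0 := aux_ev_ne_of_hasDerivAt (h23 t0) H2 H3
      have e3 : ∀ᶠ t in 𝓝[≠] t0, f1 t ≠ 0 :=
        aux_ev_ne_of_deriv_ev_ne hd1 H1 (by rwa [e1])
      exact aux_ev_ne_of_deriv_ev_ne hd0 h0 (by rwa [e0])
    · have e3 : ∀ᶠ t in 𝓝[≠] t0, f1 t ≠ 0 := aux_ev_ne_of_hasDerivAt (h12 t0) H1 H2
      exact aux_ev_ne_of_deriv_ev_ne hd0 h0 (by rwa [e0])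
  · exact aux_ev_ne_of_hasDerivAt (h01 t0) h0 H1

/-- The second component map on the tangent bundle of `ℝ` is smooth. -/
lemma aux_contMDiff_snd_tangent :
    ContMDiff 𝓘(ℝ, ℝ).tangent 𝓘(ℝ, ℝ) (⊤ : ℕ∞)
      (fun v : TangentBundle 𝓘(ℝ, ℝ) ℝ => v.2) := by
  exact contMDiff_snd_tangentBundle_modelSpace ℝ 𝓘(ℝ, ℝ)

/-- The Lie derivative of a smooth function along a smooth vector field is smooth. -/
lemma aux_lieDeriv_contMDiff (I : ModelWithCorners ℝ E H) [IsManifold I ((⊤ : ℕ∞) : WithTop ℕ∞) M]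
    (X : (p : M) → TangentSpace I p)
    (hXsmooth : ContMDiff I I.tangent (⊤ : ℕ∞) (fun p => (⟨p, X p⟩ : TangentBundle I M)))
    (g : M → ℝ) (hg : ContMDiff I 𝓘(ℝ, ℝ) (⊤ : ℕ∞) g) :
    ContMDiff I 𝓘(ℝ, ℝ) (⊤ : ℕ∞) (lieDeriv I X g) := by
  have h1 : ContMDiff I 𝓘(ℝ, ℝ).tangent (⊤ : ℕ∞)
      (fun p => tangentMap I 𝓘(ℝ, ℝ) g ⟨p, X p⟩) :=
    (hg.contMDiff_tangentMap (by simp)).comp hXsmooth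
  exact aux_contMDiff_snd_tangent.comp h1

/-- Chain rule: the derivative of `g` along the flow of `X` is the Lie derivative. -/
lemma aux_chain_deriv (I : ModelWithCorners ℝ E H) [IsManifold I ((⊤ : ℕ∞) : WithTop ℕ∞) M]
    (X : (p : M) → TangentSpace I p) (φX : M → ℝ → M)
    (hφODE : ∀ p t, HasMFDerivAt 𝓘(ℝ, ℝ) I (φX p) t
      ((ContinuousLinearMap.id ℝ ℝ).smulRight (X (φX p t))))
    (g : M → ℝ) (hg : MDifferentiable I 𝓘(ℝ, ℝ) g) (p : M) (t : ℝ) :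
    HasDerivAt (fun s => g (φX p s)) (lieDeriv I X g (φX p t)) t := by
  have hcomp := HasMFDerivAt.comp t ((hg (φX p t)).hasMFDerivAt) (hφODE p t)
  rw [hasMFDerivAt_iff_hasFDerivAt] at hcomp
  have h2 : HasDerivAt (fun s => g (φX p s)) (((mfderiv I 𝓘(ℝ, ℝ) g (φX p t)).comp
      ((ContinuousLinearMap.id ℝ ℝ).smulRight (X (φX p t)))) 1) t := HasFDerivAt.hasDerivAt (F := ℝ) hcomp
  have h3 : ((mfderiv I 𝓘(ℝ, ℝ) g (φX p t)).comp
      ((ContinuousLinearMap.id ℝ ℝ).smulRight (X (φX p t)))) 1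
      = lieDeriv I X g (φX p t) := by
    simp [lieDeriv, ContinuousLinearMap.comp_apply]
  exact h3 ▸ h2

theorem orbit_meets_switching_manifold_discretely
    (I : ModelWithCorners ℝ E H) [I.Boundaryless] [IsManifold I ((⊤ : ℕ∞) : WithTop ℕ∞) M]
    [CompactSpace M] [T2Space M] [FiniteDimensional ℝ E]
    (hdim : Module.finrank ℝ E = 3)
    (h : M → ℝ) (hsmooth : ContMDiff I 𝓘(ℝ, ℝ) (⊤ : ℕ∞) h)
    (hreg : ∀ p : M, h p = 0 → mfderiv I 𝓘(ℝ, ℝ) h p ≠ 0)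
    (X : (p : M) → TangentSpace I p)
    (hXsmooth : ContMDiff I I.tangent (⊤ : ℕ∞) (fun p => (⟨p, X p⟩ : TangentBundle I M)))
    (φX : M → ℝ → M)
    (hφcont : Continuous fun q : M × ℝ => φX q.1 q.2)
    (hφ0 : ∀ p, φX p 0 = p)
    (hφadd : ∀ p s t, φX (φX p s) t = φX p (s + t))
    (hφODE : ∀ p t, HasMFDerivAt 𝓘(ℝ, ℝ) I (φX p) t
      ((ContinuousLinearMap.id ℝ ℝ).smulRight (X (φX p t))))
    -- every point of Σ is transversal, a tangency of order 2, or a tangency of order 3: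
    (htang : ∀ p : M, h p = 0 →
      ¬(lieDeriv I X h p = 0 ∧ lieDeriv I X (lieDeriv I X h) p = 0 ∧
        lieDeriv I X (lieDeriv I X (lieDeriv I X h)) p = 0)) :
    ∀ p : M, DiscreteTopology {t : ℝ // h (φX p t) = 0} := by
  intro p
  have hXh : ContMDiff I 𝓘(ℝ, ℝ) (⊤ : ℕ∞) (lieDeriv I X h) :=
    aux_lieDeriv_contMDiff I X hXsmooth h hsmooth
  have hXXh : ContMDiff I 𝓘(ℝ, ℝ) (⊤ : ℕ∞) (lieDeriv I X (lieDeriv I X h)) :=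
    aux_lieDeriv_contMDiff I X hXsmooth _ hXh
  have h01 : ∀ t, HasDerivAt (fun s => h (φX p s)) (lieDeriv I X h (φX p t)) t :=
    aux_chain_deriv I X φX hφODE h (hsmooth.mdifferentiable (by simp)) p
  have h12 : ∀ t, HasDerivAt (fun s => lieDeriv I X h (φX p s))
      (lieDeriv I X (lieDeriv I X h) (φX p t)) t :=
    aux_chain_deriv I X φX hφODE _ (hXh.mdifferentiable (by simp)) p
  have h23 : ∀ t, HasDerivAt (fun s => lieDeriv I X (lieDeriv I X h) (φX p s))
      (lieDeriv I X (lieDeriv I X (lieDeriv I X h)) (φX p t)) t :=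
    aux_chain_deriv I X φX hφODE _ (hXXh.mdifferentiable (by simp)) p
  have key : DiscreteTopology ↥{t : ℝ | h (φX p t) = 0} := by
    rw [discreteTopology_subtype_iff]
    intro t0 ht0
    have hiso : ∀ᶠ t in nhdsWithin t0 {t0}ᶜ, h (φX p t) ≠ 0 :=
      aux_key_isolated h01 h12 h23 ht0 (htang (φX p t0) ht0)
    exact Filter.inf_principal_eq_bot.mpr hiso
  exact key
end
end

section
/- Let p ∈ Σ⁺ with 0 < t_X^+(p) < ∞, let q = φ_X(p, t_X^+(p)) and let γ = φ_X(p, [0, t_X^+(p)]) be the corresponding trajectory arc. Assume that Xh(q) < 0 (the arc exits Σ⁺ transversally at q), that γ contains no tangency points of X other than possibly its endpoints, and that either p ∈ int Σ⁺ or Xh(p) > 0. Then t_X^+ is continuous at p: t_X^+(p̃) → t_X^+(p) as p̃ → p with p̃ ∈ Σ⁺. -/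
/- STATEMENT 5: if 0 < t_X^+(p) < ∞, the arc γ = φ_X(p,[0,t_X^+(p)]) exits Σ⁺
transversally (Xh < 0 at the endpoint q ∈ Σ), γ contains no tangency points of X other
than possibly its endpoints, and either p ∈ int Σ⁺ or Xh(p) > 0, then t_X^+ is
continuous at p within Σ⁺. -/

open scoped Manifold ENNReal
open Set

noncomputable section

variable {E H M : Type*} [NormedAddCommGroup E] [NormedSpace ℝ E]
  [TopologicalSpace H] [TopologicalSpace M] [ChartedSpace H M]

section Aux
variable {I : ModelWithCorners ℝ E H} [IsManifold I (⊤ : ℕ∞) M]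
  {h : M → ℝ} {X : (p : M) → TangentSpace I p} {φX : M → ℝ → M}

lemma auxHasDerivAt (hsmooth : ContMDiff I 𝓘(ℝ, ℝ) (⊤ : ℕ∞) h)
    (hφODE : ∀ p t, HasMFDerivAt 𝓘(ℝ, ℝ) I (φX p) t
      ((ContinuousLinearMap.id ℝ ℝ).smulRight (X (φX p t))))
    (x : M) (t : ℝ) :
    HasDerivAt (fun τ => h (φX x τ)) (lieDeriv I X h (φX x t)) t := by
  have h1 : HasMFDerivAt I 𝓘(ℝ, ℝ) h (φX x t) (mfderiv I 𝓘(ℝ, ℝ) h (φX x t)) :=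
    (hsmooth.mdifferentiableAt (by simp)).hasMFDerivAt
  have h2 : HasMFDerivAt 𝓘(ℝ, ℝ) 𝓘(ℝ, ℝ) (h ∘ φX x) t
      ((mfderiv I 𝓘(ℝ, ℝ) h (φX x t)).comp
        ((ContinuousLinearMap.id ℝ ℝ).smulRight (X (φX x t)))) :=
    HasMFDerivAt.comp (f := φX x) t h1 (hφODE x t)
  have h3 := HasFDerivAt.hasDerivAt (𝕜 := ℝ) (F := ℝ) h2.hasFDerivAt
  have h4 : HasDerivAt (fun τ => h (φX x τ))
      ((mfderiv I 𝓘(ℝ, ℝ) h (φX x t)) ((1 : ℝ) • (X (φX x t)))) t := h3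
  rw [one_smul] at h4
  exact h4

lemma auxContLie (hsmooth : ContMDiff I 𝓘(ℝ, ℝ) (⊤ : ℕ∞) h)
    (hXsmooth : ContMDiff I I.tangent (⊤ : ℕ∞) (fun p => (⟨p, X p⟩ : TangentBundle I M))) :
    Continuous (lieDeriv I X h) := by
  have h1 : ContMDiff I.tangent 𝓘(ℝ, ℝ).tangent (⊤ : ℕ∞) (tangentMap I 𝓘(ℝ, ℝ) h) :=
    hsmooth.contMDiff_tangentMap (by simp)
  have h2 := (h1.comp hXsmooth).continuous
  have h3 := (tangentBundleModelSpaceHomeomorph 𝓘(ℝ, ℝ)).continuous.comp h2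
  exact continuous_snd.comp h3

lemma auxFixed [I.Boundaryless] [T2Space M]
    (hXsmooth : ContMDiff I I.tangent (⊤ : ℕ∞) (fun p => (⟨p, X p⟩ : TangentBundle I M)))
    (hφ0 : ∀ p, φX p 0 = p)
    (hφODE : ∀ p t, HasMFDerivAt 𝓘(ℝ, ℝ) I (φX p) t
      ((ContinuousLinearMap.id ℝ ℝ).smulRight (X (φX p t))))
    {r : M} (hr : X r = 0) (t : ℝ) : φX r t = r := by
  have hconst : IsMIntegralCurve (fun _ : ℝ => r) X := by
    intro s
    have h0 := hasMFDerivAt_const (I := 𝓘(ℝ, ℝ)) (I' := I) r s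
    have : ((1 : ℝ →L[ℝ] ℝ).smulRight (X r)) = 0 := by
      ext v; simp [hr]
    rw [this]
    exact h0
  have hcurve : IsMIntegralCurve (φX r) X := by
    intro s
    have := hφODE r s
    rwa [← ContinuousLinearMap.one_def] at this
  have heq := isMIntegralCurve_Ioo_eq_of_contMDiff_boundaryless (t₀ := 0)
    (hXsmooth.of_le (by simp)) hcurve hconst (by simp [hφ0])
  exact congrFun heq t

end Aux

theorem exitTimePlus_continuousWithinAt_of_transversal_exit
    (I : ModelWithCorners ℝ E H) [I.Boundaryless] [IsManifold I (⊤ : ℕ∞) M]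
    [CompactSpace M] [T2Space M] [FiniteDimensional ℝ E]
    (hdim : Module.finrank ℝ E = 3)
    (h : M → ℝ) (hsmooth : ContMDiff I 𝓘(ℝ, ℝ) (⊤ : ℕ∞) h)
    (hreg : ∀ p : M, h p = 0 → mfderiv I 𝓘(ℝ, ℝ) h p ≠ 0)
    (X : (p : M) → TangentSpace I p)
    (hXsmooth : ContMDiff I I.tangent (⊤ : ℕ∞) (fun p => (⟨p, X p⟩ : TangentBundle I M)))
    (φX : M → ℝ → M)
    (hφcont : Continuous fun q : M × ℝ => φX q.1 q.2)
    (hφ0 : ∀ p, φX p 0 = p)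
    (hφadd : ∀ p s t, φX (φX p s) t = φX p (s + t))
    (hφODE : ∀ p t, HasMFDerivAt 𝓘(ℝ, ℝ) I (φX p) t
      ((ContinuousLinearMap.id ℝ ℝ).smulRight (X (φX p t))))
    (p : M) (hp : 0 ≤ h p)
    (T : ℝ) (hTpos : 0 < T)
    (hT : exitTimePlus I X φX h p = ENNReal.ofReal T)
    -- the arc exits Σ⁺ transversally at q = φ_X(p, t_X^+(p)):
    (hq : h (φX p T) = 0) (hqtrans : lieDeriv I X h (φX p T) < 0)
    -- γ contains no tangency points of X other than possibly its endpoints: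
    (hnotang : ∀ t ∈ Ioo (0 : ℝ) T,
      ¬(h (φX p t) = 0 ∧ lieDeriv I X h (φX p t) = 0 ∧ X (φX p t) ≠ 0))
    -- either p ∈ int Σ⁺ or Xh(p) > 0:
    (hstart : 0 < h p ∨ 0 < lieDeriv I X h p) :
    ContinuousWithinAt (exitTimePlus I X φX h) {x : M | 0 ≤ h x} p := by
  classical
  set Exit : Set M := invisibleCusps I X h ∪ {x : M | h x = 0 ∧ lieDeriv I X h x < 0}
    with hExitDef
  have hExit0 : ∀ y : M, y ∈ Exit → h y = 0 := by
    rintro y (hy | hy)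
    · exact hy.1
    · exact hy.1
  have hDer : ∀ (x : M) (t : ℝ),
      HasDerivAt (fun τ => h (φX x τ)) (lieDeriv I X h (φX x t)) t :=
    auxHasDerivAt hsmooth hφODE
  have hLcont : Continuous (lieDeriv I X h) := auxContLie hsmooth hXsmooth
  have hContPair : Continuous fun z : M × ℝ => h (φX z.1 z.2) := hsmooth.continuous.comp hφcont
  have hLPair : Continuous fun z : M × ℝ => lieDeriv I X h (φX z.1 z.2) := hLcont.comp hφcont
  have hContt : ∀ x : M, Continuous fun t : ℝ => h (φX x t) := fun x =>
    hContPair.comp (continuous_const.prodMk continuous_id)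
  -- unfold the hypothesis on the exit time at `p`
  have hT' : sInf {s : ℝ≥0∞ | ∃ t : ℝ, 0 < t ∧ φX p t ∈ Exit ∧ s = ENNReal.ofReal t}
      = ENNReal.ofReal T := by
    have hthis := hT
    unfold exitTimePlus exitTimeGen at hthis
    rw [← hExitDef] at hthis
    split_ifs at hthis with hcond1 hcond2
    · exact absurd hthis.symm ENNReal.ofReal_ne_top
    · exact hthis
    · exact absurd hthis (ne_of_lt (ENNReal.ofReal_pos.mpr hTpos))
  have hNoExit : ∀ t : ℝ, 0 < t → t < T → φX p t ∉ Exit := by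
    intro t ht0 htT hmem
    have hle : sInf {s : ℝ≥0∞ | ∃ t : ℝ, 0 < t ∧ φX p t ∈ Exit ∧ s = ENNReal.ofReal t}
        ≤ ENNReal.ofReal t := sInf_le ⟨t, ht0, hmem, rfl⟩
    rw [hT', ENNReal.ofReal_le_ofReal_iff ht0.le] at hle
    linarith
  -- small-time positivity, uniformly near `p`
  have hsmall : ∃ δ > (0:ℝ), ∃ U ∈ nhds p, ∀ x ∈ U, 0 ≤ h x →
      ∀ t ∈ Icc (0:ℝ) δ, 0 ≤ h (φX x t) ∧ (0 < t → 0 < h (φX x t)) := by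
    rcases hstart with hp0 | hX0'
    · have hmem : {z : M × ℝ | 0 < h (φX z.1 z.2)} ∈ nhds (p, 0) := by
        apply (isOpen_lt continuous_const hContPair).mem_nhds
        show 0 < h (φX p 0)
        rw [hφ0 p]; exact hp0
      rw [mem_nhds_prod_iff] at hmem
      obtain ⟨U, hU, V, hV, hUV⟩ := hmem
      rw [Metric.mem_nhds_iff] at hV
      obtain ⟨r, hr, hball⟩ := hV
      refine ⟨r / 2, by linarith, U, hU, ?_⟩
      intro x hx _ t ht
      have htV : t ∈ V := by
        apply hball
        rw [Real.ball_eq_Ioo]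
        exact ⟨by linarith [ht.1], by linarith [ht.2]⟩
      have hpos : 0 < h (φX x t) := hUV (Set.mk_mem_prod hx htV)
      exact ⟨hpos.le, fun _ => hpos⟩
    · have hmem : {z : M × ℝ | 0 < lieDeriv I X h (φX z.1 z.2)} ∈ nhds (p, 0) := by
        apply (isOpen_lt continuous_const hLPair).mem_nhds
        show 0 < lieDeriv I X h (φX p 0)
        rw [hφ0 p]; exact hX0'
      rw [mem_nhds_prod_iff] at hmem
      obtain ⟨U, hU, V, hV, hUV⟩ := hmem
      rw [Metric.mem_nhds_iff] at hV
      obtain ⟨r, hr, hball⟩ := hV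
      refine ⟨r / 2, by linarith, U, hU, ?_⟩
      intro x hx hx0 t ht
      have hVmem : ∀ τ : ℝ, τ ∈ Icc (0:ℝ) (r / 2) → τ ∈ V := by
        intro τ hτ
        apply hball
        rw [Real.ball_eq_Ioo]
        exact ⟨by linarith [hτ.1], by linarith [hτ.2]⟩
      have hmono : StrictMonoOn (fun τ => h (φX x τ)) (Icc 0 (r / 2)) := by
        apply strictMonoOn_of_deriv_pos (convex_Icc _ _) (hContt x).continuousOn
        intro τ hτ
        rw [interior_Icc] at hτ
        rw [(hDer x τ).deriv]
        exact hUV (Set.mk_mem_prod hx (hVmem τ (Ioo_subset_Icc_self hτ)))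
      have hx00 : h (φX x 0) = h x := by rw [hφ0 x]
      rcases eq_or_lt_of_le ht.1 with h0 | h0
      · refine ⟨?_, ?_⟩
        · rw [← h0, hx00]; exact hx0
        · intro hcon; rw [← h0] at hcon; exact absurd hcon (lt_irrefl 0)
      · have hlt : h (φX x 0) < h (φX x t) :=
          hmono (left_mem_Icc.mpr (by linarith)) ht h0
        rw [hφ0 x] at hlt
        exact ⟨le_trans hx0 hlt.le, fun _ => lt_of_le_of_lt hx0 hlt⟩
  obtain ⟨δ₀, hδ₀pos, U₀, hU₀, hU₀prop⟩ := hsmall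
  have hpprop := hU₀prop p (mem_of_mem_nhds hU₀) hp
  -- transversality neighborhood near `(p, T)`
  obtain ⟨U₁, hU₁, δ₁, hδ₁pos, hU₁prop⟩ : ∃ U ∈ nhds p, ∃ δ > (0:ℝ), ∀ x ∈ U,
      ∀ t ∈ Icc (T - δ) (T + δ), lieDeriv I X h (φX x t) < 0 := by
    have hmem : {z : M × ℝ | lieDeriv I X h (φX z.1 z.2) < 0} ∈ nhds (p, T) :=
      (isOpen_lt hLPair continuous_const).mem_nhds hqtrans
    rw [mem_nhds_prod_iff] at hmem
    obtain ⟨U, hU, V, hV, hUV⟩ := hmem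
    rw [Metric.mem_nhds_iff] at hV
    obtain ⟨r, hr, hball⟩ := hV
    refine ⟨U, hU, r / 2, by linarith, ?_⟩
    intro x hx t ht
    refine hUV (Set.mk_mem_prod hx (hball ?_))
    rw [Real.ball_eq_Ioo]
    exact ⟨by linarith [ht.1], by linarith [ht.2]⟩
  have hanti : StrictAntiOn (fun t => h (φX p t)) (Icc (T - δ₁) (T + δ₁)) := by
    apply strictAntiOn_of_deriv_neg (convex_Icc _ _) (hContt p).continuousOn
    intro t ht
    rw [interior_Icc] at ht
    rw [(hDer p t).deriv]
    exact hU₁prop p (mem_of_mem_nhds hU₁) t (Ioo_subset_Icc_self ht)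
  -- positivity of `h` along the open arc
  have KPos : ∀ t : ℝ, 0 < t → t < T → 0 < h (φX p t) := by
    intro t ht0 htT
    by_contra hcc
    push_neg at hcc
    have htδ : δ₀ < t := by
      by_contra hle
      push_neg at hle
      have := (hpprop t ⟨ht0.le, hle⟩).2 ht0
      linarith
    set B := {τ : ℝ | τ ∈ Icc δ₀ t ∧ h (φX p τ) ≤ 0} with hBdef
    have hBne : t ∈ B := ⟨⟨htδ.le, le_rfl⟩, hcc⟩
    have hBclosed : IsClosed B :=
      IsClosed.inter isClosed_Icc (isClosed_Iic.preimage (hContt p))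
    have hBbdd : BddBelow B := ⟨δ₀, fun τ hτ => hτ.1.1⟩
    have hsB : sInf B ∈ B := hBclosed.csInf_mem ⟨t, hBne⟩ hBbdd
    set s := sInf B with hsdef
    have hposlt : ∀ τ : ℝ, δ₀ ≤ τ → τ < s → 0 < h (φX p τ) := by
      intro τ h1 h2
      by_contra hc2
      push_neg at hc2
      have hτB : τ ∈ B := ⟨⟨h1, le_trans h2.le hsB.1.2⟩, hc2⟩
      exact absurd (csInf_le hBbdd hτB) (not_le.mpr h2)
    have hδs : δ₀ < s := by
      rcases lt_or_eq_of_le hsB.1.1 with hlt | heq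
      · exact hlt
      · exfalso
        have hd := (hpprop δ₀ ⟨hδ₀pos.le, le_rfl⟩).2 hδ₀pos
        rw [heq] at hd
        linarith [hsB.2]
    have hs0 : 0 < s := lt_trans hδ₀pos hδs
    have hsT : s < T := lt_of_le_of_lt hsB.1.2 htT
    have hfs0 : h (φX p s) = 0 := by
      refine le_antisymm hsB.2 ?_
      have hts : Filter.Tendsto (fun τ => h (φX p τ)) (nhdsWithin s (Iio s))
          (nhds (h (φX p s))) :=
        ((hContt p).tendsto s).mono_left nhdsWithin_le_nhds
      refine ge_of_tendsto hts ?_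
      filter_upwards [Ioo_mem_nhdsLT_of_mem ⟨hδs, le_rfl⟩] with τ hτ
      exact (hposlt τ hτ.1.le hτ.2).le
    have hLle : lieDeriv I X h (φX p s) ≤ 0 := by
      have hDW := (hDer p s).hasDerivWithinAt (s := Iio s)
      rw [hasDerivWithinAt_iff_tendsto_slope] at hDW
      have hss : Iio s \ {s} = Iio s := Set.diff_singleton_eq_self (by simp)
      rw [hss] at hDW
      refine le_of_tendsto hDW ?_
      filter_upwards [Ioo_mem_nhdsLT_of_mem ⟨hδs, le_rfl⟩] with τ hτ
      have h1 : 0 < h (φX p τ) := hposlt τ hτ.1.le hτ.2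
      have h2 : τ - s < 0 := sub_neg.mpr hτ.2
      have h3 : (h (φX p τ) - h (φX p s)) / (τ - s) ≤ 0 := by
        rw [hfs0, sub_zero]
        exact (div_neg_of_pos_of_neg h1 h2).le
      simpa [slope_def_field] using h3
    rcases lt_or_eq_of_le hLle with hLlt | hLeq
    · exact hNoExit s hs0 hsT (Or.inr ⟨hfs0, hLlt⟩)
    · have hX0 : X (φX p s) = 0 := by
        by_contra hXne
        exact hnotang s ⟨hs0, hsT⟩ ⟨hfs0, hLeq, hXne⟩
      have hfix := auxFixed hXsmooth hφ0 hφODE hX0 (T - s)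
      have hTs : φX p T = φX p s := by
        have h3 := hφadd p s (T - s)
        rw [hfix] at h3
        rw [show s + (T - s) = T by ring] at h3
        exact h3.symm
      have hzero : lieDeriv I X h (φX p T) = 0 := by
        rw [hTs]
        simp [lieDeriv, hX0]; rfl
      linarith [hqtrans]
  -- the main quantitative estimate
  have key : ∀ c : ℝ, 0 < c → ∀ᶠ x in nhdsWithin p {x : M | 0 ≤ h x},
      exitTimePlus I X φX h x ∈ Icc (ENNReal.ofReal (T - c)) (ENNReal.ofReal (T + c)) := by
    intro c hc
    obtain ⟨ε, hεpos, hεc, hεT, hεδ⟩ : ∃ ε : ℝ, 0 < ε ∧ ε ≤ c ∧ ε ≤ T / 2 ∧ ε ≤ δ₁ :=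
      ⟨min c (min (T / 2) δ₁), lt_min hc (lt_min (by linarith) hδ₁pos), min_le_left _ _,
        le_trans (min_le_right _ _) (min_le_left _ _),
        le_trans (min_le_right _ _) (min_le_right _ _)⟩
    obtain ⟨t₀, t₁, ht₀def, ht₁def⟩ : ∃ t₀ t₁ : ℝ, t₀ = T - ε / 2 ∧ t₁ = T + ε / 2 :=
      ⟨_, _, rfl, rfl⟩
    have ht₀pos : 0 < t₀ := by linarith
    have ht₀T : t₀ < T := by linarith
    have ht₁T : T < t₁ := by linarith
    have hpt₁neg : h (φX p t₁) < 0 := by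
      have hlt := hanti (⟨by linarith, by linarith⟩ : T ∈ Icc (T - δ₁) (T + δ₁))
        (⟨by linarith, by linarith⟩ : t₁ ∈ Icc (T - δ₁) (T + δ₁)) ht₁T
      simpa [hq] using hlt
    have hB : {x : M | h (φX x t₁) < 0} ∈ nhds p := by
      have hcont1 : Continuous fun x : M => h (φX x t₁) :=
        hContPair.comp (continuous_id.prodMk continuous_const)
      exact (isOpen_lt hcont1 continuous_const).mem_nhds hpt₁neg
    obtain ⟨δ₂, hδ₂pos, hδ₂t₀, hδ₂δ₀⟩ : ∃ d : ℝ, 0 < d ∧ d ≤ t₀ ∧ d ≤ δ₀ :=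
      ⟨min δ₀ t₀, lt_min hδ₀pos ht₀pos, min_le_right _ _, min_le_left _ _⟩
    obtain ⟨u, v, huopen, hvopen, hpu, hIccv, huv⟩ :=
      generalized_tube_lemma (isCompact_singleton : IsCompact {p}) (isCompact_Icc (a := δ₂) (b := t₀))
        (isOpen_lt continuous_const hContPair)
        (by
          rintro ⟨x, τ⟩ ⟨hx, hτ⟩
          rw [mem_singleton_iff] at hx
          subst hx
          exact KPos τ (lt_of_lt_of_le hδ₂pos hτ.1) (lt_of_le_of_lt hτ.2 ht₀T))
    have hu : u ∈ nhds p := huopen.mem_nhds (hpu (mem_singleton p))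
    filter_upwards [mem_nhdsWithin_of_mem_nhds hU₀, mem_nhdsWithin_of_mem_nhds hU₁,
      mem_nhdsWithin_of_mem_nhds hB, mem_nhdsWithin_of_mem_nhds hu, self_mem_nhdsWithin]
      with x hxU₀ hxU₁ hxB hxu hxSig
    have hx0 : 0 ≤ h x := hxSig
    have hpos : ∀ t : ℝ, 0 < t → t ≤ t₀ → 0 < h (φX x t) := by
      intro t h1 h2
      rcases le_or_gt t δ₂ with hle | hlt
      · exact (hU₀prop x hxU₀ hx0 t ⟨h1.le, le_trans hle hδ₂δ₀⟩).2 h1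
      · exact huv (Set.mk_mem_prod hxu (hIccv ⟨hlt.le, h2⟩))
    have hnonneg : ∀ t : ℝ, t ∈ Icc (0:ℝ) δ₂ → 0 ≤ h (φX x t) :=
      fun t ht => (hU₀prop x hxU₀ hx0 t ⟨ht.1, le_trans ht.2 hδ₂δ₀⟩).1
    have hxt₁ : h (φX x t₁) < 0 := hxB
    have hIVT := intermediate_value_Icc' (by linarith : t₀ ≤ t₁) (hContt x).continuousOn
    have h0mem : (0:ℝ) ∈ Icc (h (φX x t₁)) (h (φX x t₀)) :=
      ⟨hxt₁.le, (hpos t₀ ht₀pos le_rfl).le⟩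
    obtain ⟨s, hsIcc, hs0⟩ := hIVT h0mem
    have hspos : 0 < s := lt_of_lt_of_le ht₀pos hsIcc.1
    have hsL : lieDeriv I X h (φX x s) < 0 :=
      hU₁prop x hxU₁ s ⟨by linarith [hsIcc.1], by linarith [hsIcc.2]⟩
    have hsExit : φX x s ∈ Exit := Or.inr ⟨hs0, hsL⟩
    have hc1 : ¬ ∀ t : ℝ, 0 ≤ t → φX x t ∈ {y : M | 0 ≤ h y} := by
      intro hall
      have hge : (0:ℝ) ≤ h (φX x t₁) := hall t₁ (by linarith)
      linarith
    have hc2 : ∃ e > (0:ℝ), ∀ t ∈ Icc (0:ℝ) e, φX x t ∈ {y : M | 0 ≤ h y} :=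
      ⟨δ₂, hδ₂pos, fun t ht => hnonneg t ht⟩
    have hval : exitTimePlus I X φX h x
        = sInf {s' : ℝ≥0∞ | ∃ t : ℝ, 0 < t ∧ φX x t ∈ Exit ∧ s' = ENNReal.ofReal t} := by
      unfold exitTimePlus exitTimeGen
      rw [← hExitDef, if_neg hc1, if_pos hc2]
    rw [hval]
    constructor
    · refine le_sInf ?_
      rintro b ⟨t, ht0, htExit, rfl⟩
      have hht : h (φX x t) = 0 := hExit0 _ htExit
      have htgt : t₀ < t := by
        by_contra hle
        push_neg at hle
        exact absurd hht (ne_of_gt (hpos t ht0 hle))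
      exact ENNReal.ofReal_le_ofReal (by linarith)
    · refine le_trans (sInf_le ⟨s, hspos, hsExit, rfl⟩) ?_
      exact ENNReal.ofReal_le_ofReal (by linarith [hsIcc.2])
  -- conclude
  have htend : Filter.Tendsto (exitTimePlus I X φX h) (nhdsWithin p {x : M | 0 ≤ h x})
      (nhds (ENNReal.ofReal T)) := by
    rw [ENNReal.tendsto_nhds ENNReal.ofReal_ne_top]
    intro εE hεE
    obtain ⟨c, hc0, hcle⟩ : ∃ c : ℝ, 0 < c ∧ ENNReal.ofReal c ≤ εE := by
      rcases le_or_gt 1 εE with h1 | h1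
      · exact ⟨1, one_pos, by simpa using h1⟩
      · refine ⟨εE.toReal, ENNReal.toReal_pos hεE.ne' (h1.trans_le le_top).ne, ?_⟩
        rw [ENNReal.ofReal_toReal (h1.trans_le le_top).ne]
    filter_upwards [key c hc0] with x hx
    constructor
    · refine le_trans ?_ hx.1
      rw [ENNReal.ofReal_sub _ hc0.le]
      exact tsub_le_tsub_left hcle _
    · refine le_trans hx.2 ?_
      calc ENNReal.ofReal (T + c) = ENNReal.ofReal T + ENNReal.ofReal c :=
            ENNReal.ofReal_add hTpos.le hc0.le
        _ ≤ ENNReal.ofReal T + εE := add_le_add_right hcle _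
  unfold ContinuousWithinAt
  rw [hT]
  exact htend
end
end
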